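/- arXiv:2506.23065 — 8 statements merged into one kernel-verified Lean document; each statement's English description precedes it below -/
import Mathlib

section
/- Fix t1, t2 > 0. Then the limit as N → ∞ of (1/(N log N)) · ∫_{[0,N]²} dx1 dx2 ∫_0^{t1∧t2} ds ∫_ℝ dy · s^{1/4} · p_{s(t1-s)/t1}(y - (s/t1)·x1) · p_{s(t2-s)/t2}(y - (s/t2)·x2) equals 0. -/
set_option maxHeartbeats 1000000

open MeasureTheory Real Filter intervalIntegral Set

/-- The heat kernel `p_t(x) = (2πt)^{-1/2} exp(-x²/(2t))`. -/
noncomputable def heatKernel (t x : ℝ) : ℝ :=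
  Real.exp (-x ^ 2 / (2 * t)) / Real.sqrt (2 * Real.pi * t)


lemma heatKernel_nonneg (t x : ℝ) : 0 ≤ heatKernel t x :=
  div_nonneg (Real.exp_pos _).le (Real.sqrt_nonneg _)

lemma heatKernel_zero (x : ℝ) : heatKernel 0 x = 0 := by
  simp [heatKernel]

lemma heatKernel_eq {b : ℝ} (z : ℝ) :
    heatKernel b z = (Real.sqrt (2*Real.pi*b))⁻¹ * Real.exp (-(1/(2*b)) * z^2) := by
  rw [heatKernel, div_eq_inv_mul]
  congr 1
  congr 1
  ring

lemma integrable_heatKernel {b : ℝ} (hb : 0 < b) (m : ℝ) :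
    Integrable (fun y => heatKernel b (y - m)) := by
  simp_rw [heatKernel_eq]
  exact (((integrable_exp_neg_mul_sq (show (0:ℝ) < 1/(2*b) by positivity)).comp_sub_right
    m)).const_mul _

lemma integral_heatKernel {b : ℝ} (hb : 0 < b) (m : ℝ) :
    ∫ y : ℝ, heatKernel b (y - m) = 1 := by
  simp_rw [heatKernel_eq]
  rw [MeasureTheory.integral_const_mul]
  have : ∫ y : ℝ, Real.exp (-(1/(2*b)) * (y - m)^2) = ∫ y : ℝ, Real.exp (-(1/(2*b)) * y^2) :=
    integral_sub_right_eq_self (fun y => Real.exp (-(1/(2*b)) * y^2)) m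
  rw [this, integral_gaussian]
  rw [show Real.pi / (1/(2*b)) = 2*Real.pi*b by field_simp]
  rw [inv_mul_cancel₀]
  exact (Real.sqrt_ne_zero'.mpr (by positivity))

lemma heatKernel_mul_le {a b : ℝ} (ha : 0 < a) (hb : 0 < b) (m1 m2 y : ℝ) :
    heatKernel a (y - m1) * heatKernel b (y - m2) ≤
      Real.exp (-(m1-m2)^2 / (2*(a+b))) / Real.sqrt (2*Real.pi*a) *
        heatKernel b (y - (b*m1 + a*m2)/(a+b)) := by
  set μ := (b*m1 + a*m2)/(a+b) with hμ
  rw [heatKernel, heatKernel, heatKernel, div_mul_div_comm, div_mul_div_comm]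
  have hD : (0:ℝ) < Real.sqrt (2*Real.pi*a) * Real.sqrt (2*Real.pi*b) := by
    have := Real.pi_pos; positivity
  rw [div_le_div_iff_of_pos_right hD, ← Real.exp_add, ← Real.exp_add]
  apply Real.exp_le_exp.mpr
  have key : -(y - m1) ^ 2 / (2 * a) + -(y - m2) ^ 2 / (2 * b) =
      (-(m1 - m2) ^ 2 / (2 * (a + b)) + -(y - μ) ^ 2 / (2 * b)) + (-(y - μ)^2 / (2*a)) := by
    rw [hμ]
    field_simp
    ring
  rw [key]
  have h2 : -(y - μ)^2 / (2*a) ≤ 0 := by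
    apply div_nonpos_of_nonpos_of_nonneg (by nlinarith [sq_nonneg (y-μ)]) (by positivity)
  linarith

lemma heatKernel_le {a : ℝ} (ha : 0 < a) (z : ℝ) : heatKernel a z ≤ (Real.sqrt (2*Real.pi*a))⁻¹ := by
  rw [heatKernel, div_eq_mul_inv]
  apply mul_le_of_le_one_left (by positivity)
  apply Real.exp_le_one_iff.mpr
  exact div_nonpos_of_nonpos_of_nonneg (neg_nonpos.mpr (sq_nonneg z)) (by positivity)

lemma continuous_heatKernel (a : ℝ) : Continuous (fun z => heatKernel a z) := by
  unfold heatKernel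
  fun_prop

lemma integral_y_le {a b : ℝ} (ha : 0 < a) (hb : 0 < b) (c m1 m2 : ℝ) (hc : 0 ≤ c) :
    ∫ y : ℝ, c * heatKernel a (y - m1) * heatKernel b (y - m2) ≤
      c * (Real.exp (-(m1-m2)^2 / (2*(a+b))) / Real.sqrt (2*Real.pi*a)) := by
  set μ := (b*m1 + a*m2)/(a+b) with hμ
  set A := Real.exp (-(m1-m2)^2 / (2*(a+b))) / Real.sqrt (2*Real.pi*a) with hA
  have hint : Integrable (fun y => c * heatKernel a (y - m1) * heatKernel b (y - m2)) := by
    apply (integrable_heatKernel hb m2).bdd_mul (c := c * (Real.sqrt (2*Real.pi*a))⁻¹)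
    · exact (continuous_const.mul ((continuous_heatKernel a).comp
        (continuous_id.sub continuous_const))).aestronglyMeasurable
    · refine Filter.Eventually.of_forall (fun y => ?_)
      rw [Real.norm_eq_abs, abs_of_nonneg (mul_nonneg hc (heatKernel_nonneg a (y - m1)))]
      exact mul_le_mul_of_nonneg_left (heatKernel_le ha _) hc
  have hint2 : Integrable (fun y => c * A * heatKernel b (y - μ)) :=
    (integrable_heatKernel hb μ).const_mul _
  calc ∫ y : ℝ, c * heatKernel a (y - m1) * heatKernel b (y - m2)
      ≤ ∫ y : ℝ, c * A * heatKernel b (y - μ) := by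
        apply integral_mono hint hint2
        intro y
        calc c * heatKernel a (y - m1) * heatKernel b (y - m2)
            = c * (heatKernel a (y - m1) * heatKernel b (y - m2)) := by ring
          _ ≤ c * (A * heatKernel b (y - μ)) :=
              mul_le_mul_of_nonneg_left (heatKernel_mul_le ha hb m1 m2 y) hc
          _ = c * A * heatKernel b (y - μ) := by ring
    _ = c * A := by rw [MeasureTheory.integral_const_mul, integral_heatKernel hb, mul_one]

noncomputable def maj (t s d : ℝ) : ℝ :=
  (Real.sqrt Real.pi)⁻¹ * (s ^ (-(1:ℝ)/4) * Real.exp (-(s*d^2)/4)) +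
  ((Real.sqrt Real.pi)⁻¹ * t ^ ((1:ℝ)/4) * Real.exp (-(t*d^2)/16)) * (t-s) ^ (-(1:ℝ)/2)

lemma maj_nonneg {t s d : ℝ} (hs : 0 ≤ s) (hst : s ≤ t) : 0 ≤ maj t s d := by
  have h1 : (0:ℝ) ≤ s ^ (-(1:ℝ)/4) := Real.rpow_nonneg hs _
  have h2 : (0:ℝ) ≤ (t-s) ^ (-(1:ℝ)/2) := Real.rpow_nonneg (by linarith) _
  have h3 : (0:ℝ) ≤ t ^ ((1:ℝ)/4) := Real.rpow_nonneg (by linarith) _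
  have h4 : (0:ℝ) ≤ (Real.sqrt Real.pi)⁻¹ := by positivity
  unfold maj; positivity

lemma key_s (t1 t2 : ℝ) (ht1 : 0 < t1) (ht2 : 0 < t2) (x1 x2 : ℝ) {s : ℝ}
    (hs0 : 0 < s) (hst : s < min t1 t2) :
    ∫ y : ℝ, s ^ ((1:ℝ)/4) * heatKernel (s*(t1-s)/t1) (y - s/t1*x1) *
      heatKernel (s*(t2-s)/t2) (y - s/t2*x2) ≤ maj (min t1 t2) s (x1/t1 - x2/t2) := by
  set t := min t1 t2 with htdef
  have ht : 0 < t := lt_min ht1 ht2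
  have htt1 : t ≤ t1 := min_le_left _ _
  have htt2 : t ≤ t2 := min_le_right _ _
  set d := x1/t1 - x2/t2 with hd
  set a := s*(t1-s)/t1 with hadef
  set b := s*(t2-s)/t2 with hbdef
  set m1 := s/t1*x1 with hm1
  set m2 := s/t2*x2 with hm2
  clear_value t d a b m1 m2
  have ha : 0 < a := by
    rw [hadef]
    exact div_pos (mul_pos hs0 (by linarith [lt_of_lt_of_le hst htt1])) ht1
  have hb : 0 < b := by
    rw [hbdef]
    exact div_pos (mul_pos hs0 (by linarith [lt_of_lt_of_le hst htt2])) ht2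
  have hc : (0:ℝ) ≤ s ^ ((1:ℝ)/4) := Real.rpow_nonneg hs0.le _
  have step1 := integral_y_le ha hb (s ^ ((1:ℝ)/4)) m1 m2 hc
  refine step1.trans ?_
  -- common facts
  have hΔ : m1 - m2 = s * d := by rw [hm1, hm2, hd]; field_simp
  have ha_le : a ≤ s := by
    rw [hadef, div_le_iff₀ ht1]
    nlinarith [mul_le_mul_of_nonneg_left (show t1 - s ≤ t1 by linarith) hs0.le]
  have hb_le : b ≤ s := by
    rw [hbdef, div_le_iff₀ ht2]
    nlinarith [mul_le_mul_of_nonneg_left (show t2 - s ≤ t2 by linarith) hs0.le]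
  have hab : 0 < a + b := by linarith
  have hE4 : Real.exp (-(m1-m2)^2 / (2*(a+b))) ≤ Real.exp (-(s*d^2)/4) := by
    apply Real.exp_le_exp.mpr
    rw [hΔ, mul_pow, neg_div, neg_div, neg_le_neg_iff]
    rw [div_le_div_iff₀ (by norm_num) (by linarith)]
    have hab2s : a + b ≤ 2*s := by linarith
    nlinarith [mul_le_mul_of_nonneg_left hab2s (mul_nonneg hs0.le (sq_nonneg d))]
  have h_a_lb : s*(t-s)/t ≤ a := by
    rw [hadef, div_le_div_iff₀ ht ht1]
    nlinarith [mul_le_mul_of_nonneg_left htt1 (mul_nonneg hs0.le hs0.le)]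
  rcases le_or_gt s (t/2) with hcase | hcase
  · -- s ≤ t/2 : use first term of maj
    have ha2 : Real.pi * s ≤ 2*Real.pi*a := by
      have hh : s/2 ≤ a := by
        refine le_trans ?_ h_a_lb
        rw [le_div_iff₀ ht]
        nlinarith [mul_le_mul_of_nonneg_left (show t ≤ 2*(t-s) by linarith) hs0.le]
      nlinarith [mul_le_mul_of_nonneg_left hh Real.pi_pos.le]
    have hS : Real.sqrt (Real.pi*s) ≤ Real.sqrt (2*Real.pi*a) := Real.sqrt_le_sqrt ha2
    have hSpos : 0 < Real.sqrt (Real.pi*s) := Real.sqrt_pos.mpr (by positivity)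
    calc s ^ ((1:ℝ)/4) * (Real.exp (-(m1-m2)^2 / (2*(a+b))) / Real.sqrt (2*Real.pi*a))
        ≤ s ^ ((1:ℝ)/4) * (Real.exp (-(s*d^2)/4) / Real.sqrt (Real.pi*s)) := by
          apply mul_le_mul_of_nonneg_left (div_le_div₀ (Real.exp_pos _).le hE4 hSpos hS) hc
      _ = (Real.sqrt Real.pi)⁻¹ * (s ^ (-(1:ℝ)/4) * Real.exp (-(s*d^2)/4)) := by
          rw [Real.sqrt_mul Real.pi_pos.le, Real.sqrt_eq_rpow s]
          rw [show s ^ (-(1:ℝ)/4) = s ^ ((1:ℝ)/4) * (s ^ ((1:ℝ)/2))⁻¹ by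
            rw [← Real.rpow_neg hs0.le, ← Real.rpow_add hs0]; norm_num]
          have h1 : s ^ ((1:ℝ)/2) ≠ 0 := ne_of_gt (Real.rpow_pos_of_pos hs0 _)
          have h2 : Real.sqrt Real.pi ≠ 0 := by positivity
          field_simp
      _ ≤ maj t s d := by
          apply le_add_of_nonneg_right
          have h2 : (0:ℝ) ≤ (t-s) ^ (-(1:ℝ)/2) := Real.rpow_nonneg (by linarith) _
          have h3 : (0:ℝ) ≤ t ^ ((1:ℝ)/4) := Real.rpow_nonneg (by linarith) _
          positivity
  · -- t/2 < s : use second term of maj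
    have hE16 : Real.exp (-(s*d^2)/4) ≤ Real.exp (-(t*d^2)/16) := by
      apply Real.exp_le_exp.mpr
      rw [neg_div, neg_div, neg_le_neg_iff, div_le_div_iff₀ (by norm_num) (by norm_num)]
      nlinarith [mul_le_mul_of_nonneg_right (show t/2 ≤ s by linarith) (sq_nonneg d)]
    have ha2 : Real.pi * (t-s) ≤ 2*Real.pi*a := by
      have hts' : 0 < t - s := sub_pos.mpr hst
      have h1 : (t-s)/2 ≤ s*(t-s)/t := by
        rw [div_le_div_iff₀ (by norm_num) ht]
        nlinarith [mul_le_mul_of_nonneg_left (show t ≤ 2*s by linarith) hts'.le]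
      nlinarith [mul_le_mul_of_nonneg_left (h1.trans h_a_lb) Real.pi_pos.le]
    have hts : 0 < t - s := sub_pos.mpr hst
    have hS : Real.sqrt (Real.pi*(t-s)) ≤ Real.sqrt (2*Real.pi*a) := Real.sqrt_le_sqrt ha2
    have hSpos : 0 < Real.sqrt (Real.pi*(t-s)) := Real.sqrt_pos.mpr (by positivity)
    have hst14 : s ^ ((1:ℝ)/4) ≤ t ^ ((1:ℝ)/4) :=
      Real.rpow_le_rpow hs0.le (le_of_lt hst) (by norm_num)
    calc s ^ ((1:ℝ)/4) * (Real.exp (-(m1-m2)^2 / (2*(a+b))) / Real.sqrt (2*Real.pi*a))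
        ≤ t ^ ((1:ℝ)/4) * (Real.exp (-(t*d^2)/16) / Real.sqrt (Real.pi*(t-s))) := by
          apply mul_le_mul hst14 (div_le_div₀ (Real.exp_pos _).le (hE4.trans hE16) hSpos hS)
            (by positivity) (Real.rpow_nonneg (by linarith) _)
      _ = ((Real.sqrt Real.pi)⁻¹ * t ^ ((1:ℝ)/4) * Real.exp (-(t*d^2)/16)) * (t-s) ^ (-(1:ℝ)/2) := by
          rw [Real.sqrt_mul Real.pi_pos.le, Real.sqrt_eq_rpow (t-s)]
          rw [show (t-s) ^ (-(1:ℝ)/2) = ((t-s) ^ ((1:ℝ)/2))⁻¹ by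
            rw [← Real.rpow_neg hts.le]; norm_num]
          have h1 : (t-s) ^ ((1:ℝ)/2) ≠ 0 := ne_of_gt (Real.rpow_pos_of_pos hts _)
          have h2 : Real.sqrt Real.pi ≠ 0 := by positivity
          field_simp
      _ ≤ maj t s d := by
          apply le_add_of_nonneg_left
          have h1 : (0:ℝ) ≤ s ^ (-(1:ℝ)/4) := Real.rpow_nonneg hs0.le _
          positivity

lemma II_phi1 {d t : ℝ} (ht : 0 < t) :
    IntervalIntegrable (fun s => s ^ (-(1:ℝ)/4) * Real.exp (-(s*d^2)/4)) volume 0 t := by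
  apply IntervalIntegrable.mono_fun (intervalIntegrable_rpow' (by norm_num : (-1:ℝ) < -(1:ℝ)/4))
  · exact (Measurable.aestronglyMeasurable (by fun_prop))
  · rw [Filter.EventuallyLE, ae_restrict_iff' measurableSet_uIoc]
    apply Filter.Eventually.of_forall
    intro s hs
    rw [Set.uIoc_of_le ht.le] at hs
    have hs0 : 0 < s := hs.1
    simp only [Real.norm_eq_abs]
    rw [abs_of_nonneg (by positivity), abs_of_nonneg (Real.rpow_nonneg hs0.le _)]
    apply mul_le_of_le_one_right (Real.rpow_nonneg hs0.le _)
    apply Real.exp_le_one_iff.mpr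
    rw [neg_div, neg_nonpos]
    positivity

lemma II_term2 {t : ℝ} (ht : 0 < t) (c : ℝ) :
    IntervalIntegrable (fun s => c * (t-s) ^ (-(1:ℝ)/2)) volume 0 t := by
  have h := (intervalIntegrable_rpow' (by norm_num : (-1:ℝ) < -(1:ℝ)/2)
    (a := 0) (b := t)).comp_sub_left t
  simpa using (h.const_mul c).symm

lemma phi1_le {t : ℝ} (ht : 0 < t) (d : ℝ) :
    ∫ s in (0:ℝ)..t, s ^ (-(1:ℝ)/4) * Real.exp (-(s*d^2)/4) ≤
      ((4/3)*t^((3:ℝ)/4) + 52/3) / (1 + |d| ^ ((3:ℝ)/2)) := by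
  have hint := II_phi1 (d := d) ht
  have habs : (0:ℝ) ≤ |d| ^ ((3:ℝ)/2) := Real.rpow_nonneg (abs_nonneg d) _
  have hA : ∀ v : ℝ, 0 < v → v ≤ t →
      (∫ s in (0:ℝ)..v, s ^ (-(1:ℝ)/4) * Real.exp (-(s*d^2)/4)) ≤ (4/3)*v^((3:ℝ)/4) := by
    intro v hv hvt
    have hsub : Set.uIcc (0:ℝ) v ⊆ Set.uIcc (0:ℝ) t := by
      rw [Set.uIcc_of_le hv.le, Set.uIcc_of_le ht.le]
      exact Set.Icc_subset_Icc le_rfl hvt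
    have h1 : (∫ s in (0:ℝ)..v, s ^ (-(1:ℝ)/4) * Real.exp (-(s*d^2)/4)) ≤
        ∫ s in (0:ℝ)..v, s ^ (-(1:ℝ)/4) := by
      apply intervalIntegral.integral_mono_on hv.le (hint.mono_set hsub)
        (intervalIntegrable_rpow' (by norm_num))
      intro s hs
      apply mul_le_of_le_one_right (Real.rpow_nonneg hs.1 _)
      apply Real.exp_le_one_iff.mpr
      rw [neg_div, neg_nonpos]
      have := hs.1
      positivity
    rw [integral_rpow (Or.inl (by norm_num))] at h1
    rw [show -(1:ℝ)/4 + 1 = 3/4 by norm_num, Real.zero_rpow (by norm_num)] at h1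
    refine h1.trans (le_of_eq ?_)
    rw [show ((3:ℝ)/4) = (3:ℝ)/4 from rfl]
    ring
  have hΦA := hA t ht le_rfl
  have hB : (∫ s in (0:ℝ)..t, s ^ (-(1:ℝ)/4) * Real.exp (-(s*d^2)/4)) * |d| ^ ((3:ℝ)/2)
      ≤ 52/3 := by
    by_cases hd : d = 0
    · simp only [hd, abs_zero, Real.zero_rpow (by norm_num : ((3:ℝ)/2) ≠ 0), mul_zero]
      norm_num
    have hd0 : 0 < |d| := abs_pos.mpr hd
    set u := |d| ^ (-(2:ℝ)) with hu_def
    have hu : 0 < u := Real.rpow_pos_of_pos hd0 _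
    have hu34 : u ^ ((3:ℝ)/4) = |d| ^ (-(3:ℝ)/2) := by
      rw [hu_def, ← Real.rpow_mul (abs_nonneg d)]; norm_num
    have hmul : |d| ^ (-(3:ℝ)/2) * |d| ^ ((3:ℝ)/2) = 1 := by
      rw [← Real.rpow_add hd0]; norm_num
    rcases le_or_gt t u with htu | hut
    · have h1 : (4/3)*t^((3:ℝ)/4) ≤ (4/3)*u^((3:ℝ)/4) :=
        mul_le_mul_of_nonneg_left (Real.rpow_le_rpow ht.le htu (by norm_num)) (by norm_num)
      calc (∫ s in (0:ℝ)..t, s ^ (-(1:ℝ)/4) * Real.exp (-(s*d^2)/4)) * |d| ^ ((3:ℝ)/2)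
          ≤ ((4/3)*u^((3:ℝ)/4)) * |d| ^ ((3:ℝ)/2) :=
            mul_le_mul_of_nonneg_right (hΦA.trans h1) habs
        _ = 4/3 := by rw [hu34, mul_assoc, hmul, mul_one]
        _ ≤ 52/3 := by norm_num
    · have hsub2 : Set.uIcc u t ⊆ Set.uIcc (0:ℝ) t := by
        rw [Set.uIcc_of_le hut.le, Set.uIcc_of_le ht.le]
        exact Set.Icc_subset_Icc hu.le le_rfl
      have hsub1 : Set.uIcc (0:ℝ) u ⊆ Set.uIcc (0:ℝ) t := by
        rw [Set.uIcc_of_le hu.le, Set.uIcc_of_le ht.le]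
        exact Set.Icc_subset_Icc le_rfl hut.le
      have hsplit : (∫ s in (0:ℝ)..t, s ^ (-(1:ℝ)/4) * Real.exp (-(s*d^2)/4)) =
          (∫ s in (0:ℝ)..u, s ^ (-(1:ℝ)/4) * Real.exp (-(s*d^2)/4)) +
          ∫ s in u..t, s ^ (-(1:ℝ)/4) * Real.exp (-(s*d^2)/4) :=
        (intervalIntegral.integral_add_adjacent_intervals (hint.mono_set hsub1)
          (hint.mono_set hsub2)).symm
      have hnot0 : (0:ℝ) ∉ Set.uIcc u t := Set.notMem_uIcc_of_lt hu ht
      have hd2 : (0:ℝ) ≤ (d^2)⁻¹ := by positivity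
      have ht14 : (0:ℝ) ≤ t ^ (-(1:ℝ)/4) := Real.rpow_nonneg ht.le _
      have hu14 : (0:ℝ) ≤ u ^ (-(1:ℝ)/4) := Real.rpow_nonneg hu.le _
      have hpiece2 : (∫ s in u..t, s ^ (-(1:ℝ)/4) * Real.exp (-(s*d^2)/4)) ≤
          16 * ((d^2)⁻¹ * u ^ (-(1:ℝ)/4)) := by
        have hRint : IntervalIntegrable (fun s => 4*(d^2)⁻¹ * s ^ (-(5:ℝ)/4)) volume u t :=
          (intervalIntegrable_rpow (Or.inr hnot0)).const_mul _
        have h2 : (∫ s in u..t, s ^ (-(1:ℝ)/4) * Real.exp (-(s*d^2)/4)) ≤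
            ∫ s in u..t, 4*(d^2)⁻¹ * s ^ (-(5:ℝ)/4) := by
          apply intervalIntegral.integral_mono_on hut.le (hint.mono_set hsub2) hRint
          intro s hs
          have hs0 : 0 < s := lt_of_lt_of_le hu hs.1
          have hx : 0 < s*d^2/4 := by positivity
          have hxe : s*d^2/4 ≤ Real.exp (s*d^2/4) := by
            linarith [Real.add_one_le_exp (s*d^2/4)]
          have hexp : Real.exp (-(s*d^2)/4) ≤ (s*d^2/4)⁻¹ := by
            rw [show -(s*d^2)/4 = -(s*d^2/4) by ring, Real.exp_neg]
            exact inv_anti₀ hx hxe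
          calc s ^ (-(1:ℝ)/4) * Real.exp (-(s*d^2)/4)
              ≤ s ^ (-(1:ℝ)/4) * (s*d^2/4)⁻¹ :=
                mul_le_mul_of_nonneg_left hexp (Real.rpow_nonneg hs0.le _)
            _ = 4*(d^2)⁻¹ * s ^ (-(5:ℝ)/4) := by
                rw [show s ^ (-(5:ℝ)/4) = s ^ (-(1:ℝ)/4) * s⁻¹ by
                  rw [← Real.rpow_neg_one s, ← Real.rpow_add hs0]; norm_num]
                have hsne : s ≠ 0 := hs0.ne'
                have hdne : d^2 ≠ 0 := by positivity
                field_simp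
        rw [intervalIntegral.integral_const_mul,
          integral_rpow (Or.inr ⟨by norm_num, hnot0⟩)] at h2
        rw [show -(5:ℝ)/4 + 1 = -(1)/4 by norm_num] at h2
        refine h2.trans ?_
        rw [show (-(1:ℝ)/4 : ℝ) = -(1:ℝ)/4 from rfl]
        have key : (t ^ (-(1:ℝ)/4) - u ^ (-(1:ℝ)/4)) / (-(1:ℝ)/4) =
            4 * (u ^ (-(1:ℝ)/4) - t ^ (-(1:ℝ)/4)) := by ring
        rw [key]
        nlinarith [mul_nonneg hd2 ht14]
      have hpiece1 := hA u hu hut.le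
      -- rpow algebra
      have habs2 : (d^2)⁻¹ = |d| ^ (-(2:ℝ)) := by
        rw [Real.rpow_neg (abs_nonneg d), show ((2:ℝ)) = ((2:ℕ):ℝ) by norm_num,
          Real.rpow_natCast, sq_abs]
      have hu14' : u ^ (-(1:ℝ)/4) = |d| ^ ((1:ℝ)/2) := by
        rw [hu_def, ← Real.rpow_mul (abs_nonneg d)]; norm_num
      have hkey2 : (d^2)⁻¹ * u ^ (-(1:ℝ)/4) * |d| ^ ((3:ℝ)/2) = 1 := by
        rw [habs2, hu14', ← Real.rpow_add hd0, ← Real.rpow_add hd0]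
        norm_num
      calc (∫ s in (0:ℝ)..t, s ^ (-(1:ℝ)/4) * Real.exp (-(s*d^2)/4)) * |d| ^ ((3:ℝ)/2)
          ≤ ((4/3)*u^((3:ℝ)/4) + 16 * ((d^2)⁻¹ * u ^ (-(1:ℝ)/4))) * |d| ^ ((3:ℝ)/2) := by
            apply mul_le_mul_of_nonneg_right _ habs
            rw [hsplit]
            exact add_le_add hpiece1 hpiece2
        _ = (4/3) * (u^((3:ℝ)/4) * |d| ^ ((3:ℝ)/2)) +
            16 * ((d^2)⁻¹ * u ^ (-(1:ℝ)/4) * |d| ^ ((3:ℝ)/2)) := by ring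
        _ = 4/3 + 16 := by rw [hu34, hmul, hkey2]; ring
        _ ≤ 52/3 := by norm_num
  rw [le_div_iff₀ (by positivity : (0:ℝ) < 1 + |d| ^ ((3:ℝ)/2)), mul_one_add]
  linarith

lemma integrableOn_comp_neg_Iio {f : ℝ → ℝ} {c : ℝ} (h : IntegrableOn f (Ioi c)) :
    IntegrableOn (fun x => f (-x)) (Iio (-c)) := by
  have A : MeasurableEmbedding fun x : ℝ => -x :=
    (Homeomorph.neg ℝ).isClosedEmbedding.measurableEmbedding
  rw [IntegrableOn, show volume.restrict (Iio (-c)) =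
      (volume.restrict ((fun x : ℝ => -x) ⁻¹' (Iio (-c)))).map (fun x : ℝ => -x) by
    rw [← Measure.restrict_map A.measurable measurableSet_Iio,
      Measure.map_neg_eq_self (volume : Measure ℝ)]]
  rw [A.integrable_map_iff]
  have : ((fun x : ℝ => f (-x)) ∘ fun x : ℝ => -x) = f := by
    funext x; simp
  rw [this, show ((fun x : ℝ => -x) ⁻¹' (Iio (-c))) = Ioi c by ext x; simp]
  exact h

lemma integrable_one_add_abs_rpow {K : ℝ} (hK : 0 ≤ K) :
    Integrable (fun d : ℝ => K / (1 + |d| ^ ((3:ℝ)/2))) := by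
  set f := fun d : ℝ => K / (1 + |d| ^ ((3:ℝ)/2)) with hf
  have hcont : Continuous f := by
    apply continuous_const.div
      (continuous_const.add ((continuous_abs).rpow_const (fun x => Or.inr (by norm_num))))
    intro x
    have : (0:ℝ) ≤ |x| ^ ((3:ℝ)/2) := Real.rpow_nonneg (abs_nonneg x) _
    exact (by linarith : (0:ℝ) < 1 + |x| ^ ((3:ℝ)/2)).ne'
  have hIoi : IntegrableOn f (Ioi 1) := by
    have hbase : IntegrableOn (fun d : ℝ => K * d ^ (-(3:ℝ)/2)) (Ioi 1) := by
      exact ((integrableOn_Ioi_rpow_of_lt (by norm_num : -(3:ℝ)/2 < -1) one_pos).const_mul K)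
    apply hbase.mono' (hcont.aestronglyMeasurable.restrict)
    rw [ae_restrict_iff' measurableSet_Ioi]
    apply Filter.Eventually.of_forall
    intro d hd
    have hd1 : (1:ℝ) < d := hd
    have hd0 : 0 < d := lt_trans one_pos hd1
    have hpow : 0 < d ^ ((3:ℝ)/2) := Real.rpow_pos_of_pos hd0 _
    rw [Real.norm_eq_abs, abs_of_nonneg (by positivity : (0:ℝ) ≤ f d), hf]
    simp only []
    rw [abs_of_nonneg hd0.le]
    calc K / (1 + d ^ ((3:ℝ)/2)) ≤ K / d ^ ((3:ℝ)/2) := by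
          apply div_le_div_of_nonneg_left hK hpow; linarith
      _ = K * d ^ (-(3:ℝ)/2) := by
          rw [div_eq_mul_inv, ← Real.rpow_neg hd0.le]
          norm_num
  have hIio : IntegrableOn f (Iio (-1)) := by
    have := integrableOn_comp_neg_Iio (f := f) (c := 1) hIoi
    have heq : (fun x => f (-x)) = f := by
      funext x; rw [hf]; simp
    rw [heq] at this
    simpa using this
  have hIcc : IntegrableOn f (Icc (-1) 1) := hcont.integrableOn_Icc
  have hunion : IntegrableOn f (Iio (-1) ∪ (Icc (-1) 1 ∪ Ioi 1)) :=
    hIio.union (hIcc.union hIoi)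
  rw [← integrableOn_univ]
  apply hunion.mono_set
  intro x _
  rcases lt_or_ge x (-1) with h | h
  · exact Or.inl h
  rcases le_or_gt x 1 with h2 | h2
  · exact Or.inr (Or.inl ⟨h, h2⟩)
  · exact Or.inr (Or.inr h2)

noncomputable def psiTot (t d : ℝ) : ℝ :=
  (Real.sqrt Real.pi)⁻¹ * (((4/3)*t^((3:ℝ)/4) + 52/3) / (1 + |d| ^ ((3:ℝ)/2))) +
  ((Real.sqrt Real.pi)⁻¹ * t ^ ((1:ℝ)/4) * Real.exp (-(t*d^2)/16)) *
    (∫ s in (0:ℝ)..t, (t-s) ^ (-(1:ℝ)/2))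

lemma J_nonneg {t : ℝ} (ht : 0 < t) : 0 ≤ ∫ s in (0:ℝ)..t, (t-s) ^ (-(1:ℝ)/2) :=
  intervalIntegral.integral_nonneg ht.le
    (fun s hs => Real.rpow_nonneg (by linarith [hs.2]) _)

lemma psiTot_nonneg {t : ℝ} (ht : 0 < t) (d : ℝ) : 0 ≤ psiTot t d := by
  have h1 : (0:ℝ) ≤ |d| ^ ((3:ℝ)/2) := Real.rpow_nonneg (abs_nonneg d) _
  have h2 : (0:ℝ) ≤ t ^ ((3:ℝ)/4) := Real.rpow_nonneg ht.le _
  have h3 : (0:ℝ) ≤ t ^ ((1:ℝ)/4) := Real.rpow_nonneg ht.le _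
  have h4 := J_nonneg ht
  unfold psiTot
  positivity

lemma psiTot_integrable {t : ℝ} (ht : 0 < t) : Integrable (psiTot t) := by
  unfold psiTot
  apply Integrable.add
  · exact (integrable_one_add_abs_rpow (by linarith [Real.rpow_nonneg ht.le ((3:ℝ)/4)] :
      (0:ℝ) ≤ (4/3)*t^((3:ℝ)/4) + 52/3)).const_mul _
  · have heq : (fun d : ℝ => ((Real.sqrt Real.pi)⁻¹ * t ^ ((1:ℝ)/4) * Real.exp (-(t*d^2)/16)) *
        (∫ s in (0:ℝ)..t, (t-s) ^ (-(1:ℝ)/2))) =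
        (fun d : ℝ => ((Real.sqrt Real.pi)⁻¹ * t ^ ((1:ℝ)/4) *
          (∫ s in (0:ℝ)..t, (t-s) ^ (-(1:ℝ)/2))) * Real.exp (-(t/16)*d^2)) := by
      funext d
      rw [show -(t*d^2)/16 = -(t/16)*d^2 by ring]
      ring
    rw [heq]
    exact (integrable_exp_neg_mul_sq (by positivity)).const_mul _

lemma integral_maj_le {t : ℝ} (ht : 0 < t) (d : ℝ) :
    (∫ s in (0:ℝ)..t, maj t s d) ≤ psiTot t d := by
  unfold maj psiTot
  rw [intervalIntegral.integral_add ((II_phi1 ht).const_mul _) (II_term2 ht _),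
    intervalIntegral.integral_const_mul, intervalIntegral.integral_const_mul]
  apply add_le_add
  · exact mul_le_mul_of_nonneg_left (phi1_le ht d) (by positivity)
  · exact le_rfl

lemma L2_le (t1 t2 : ℝ) (ht1 : 0 < t1) (ht2 : 0 < t2) (x1 x2 : ℝ) :
    (∫ s in (0:ℝ)..(min t1 t2), ∫ y : ℝ,
        s ^ ((1:ℝ)/4) * heatKernel (s * (t1 - s) / t1) (y - s / t1 * x1) *
          heatKernel (s * (t2 - s) / t2) (y - s / t2 * x2))
      ≤ psiTot (min t1 t2) (x1/t1 - x2/t2) := by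
  have ht : 0 < min t1 t2 := lt_min ht1 ht2
  set t := min t1 t2 with htdef
  set d := x1/t1 - x2/t2 with hd
  by_cases hI : IntervalIntegrable (fun s => ∫ y : ℝ,
      s ^ ((1:ℝ)/4) * heatKernel (s * (t1 - s) / t1) (y - s / t1 * x1) *
        heatKernel (s * (t2 - s) / t2) (y - s / t2 * x2)) volume 0 t
  · have hImaj : IntervalIntegrable (fun s => maj t s d) volume 0 t := by
      unfold maj
      exact ((II_phi1 ht).const_mul _).add (II_term2 ht _)
    refine (intervalIntegral.integral_mono_on ht.le hI hImaj ?_).trans (integral_maj_le ht d)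
    intro s hs
    rcases eq_or_lt_of_le hs.1 with h0 | h0
    · rw [← h0]
      rw [show (∫ y : ℝ, (0:ℝ) ^ ((1:ℝ)/4) * heatKernel (0 * (t1 - 0) / t1) (y - 0 / t1 * x1) *
          heatKernel (0 * (t2 - 0) / t2) (y - 0 / t2 * x2)) = 0 by
        simp [Real.zero_rpow (by norm_num : (1:ℝ)/4 ≠ 0)]]
      exact maj_nonneg le_rfl ht.le
    rcases eq_or_lt_of_le hs.2 with hteq | hlt
    · rw [hteq]
      have hzero : (∫ y : ℝ, t ^ ((1:ℝ)/4) * heatKernel (t * (t1 - t) / t1) (y - t / t1 * x1) *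
          heatKernel (t * (t2 - t) / t2) (y - t / t2 * x2)) = 0 := by
        rcases min_choice t1 t2 with h | h
        · have h1 : t = t1 := by rw [htdef, h]
          have : t * (t1 - t) / t1 = 0 := by rw [h1]; simp
          simp [this, heatKernel_zero]
        · have h1 : t = t2 := by rw [htdef, h]
          have : t * (t2 - t) / t2 = 0 := by rw [h1]; simp
          simp [this, heatKernel_zero]
      rw [hzero]
      exact maj_nonneg ht.le le_rfl
    · exact key_s t1 t2 ht1 ht2 x1 x2 h0 hlt
  · rw [intervalIntegral.integral_undef hI]
    exact psiTot_nonneg ht d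

lemma intervalIntegral_le_integral {f : ℝ → ℝ} (hf : Integrable f) (h0 : ∀ x, 0 ≤ f x)
    {a b : ℝ} (hab : a ≤ b) : (∫ x in a..b, f x) ≤ ∫ x, f x := by
  rw [intervalIntegral.integral_of_le hab]
  exact setIntegral_le_integral hf (Filter.Eventually.of_forall h0)

theorem stmt_0 (t1 t2 : ℝ) (ht1 : 0 < t1) (ht2 : 0 < t2) :
    Tendsto (fun N : ℝ =>
      (1 / (N * Real.log N)) *
        ∫ x1 in (0:ℝ)..N, ∫ x2 in (0:ℝ)..N, ∫ s in (0:ℝ)..(min t1 t2), ∫ y : ℝ,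
          s ^ ((1:ℝ)/4) * heatKernel (s * (t1 - s) / t1) (y - s / t1 * x1) *
            heatKernel (s * (t2 - s) / t2) (y - s / t2 * x2))
      atTop (nhds 0) := by
  have ht : 0 < min t1 t2 := lt_min ht1 ht2
  set t := min t1 t2 with htdef
  set C := |t2| * ∫ d : ℝ, psiTot t d with hCdef
  have hC0 : 0 ≤ C :=
    mul_nonneg (abs_nonneg _) (integral_nonneg (fun d => psiTot_nonneg ht d))
  have hL2nn : ∀ x1 x2 : ℝ, 0 ≤ ∫ s in (0:ℝ)..t, ∫ y : ℝ,
      s ^ ((1:ℝ)/4) * heatKernel (s * (t1 - s) / t1) (y - s / t1 * x1) *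
        heatKernel (s * (t2 - s) / t2) (y - s / t2 * x2) := by
    intro x1 x2
    apply intervalIntegral.integral_nonneg ht.le
    intro s hs
    apply MeasureTheory.integral_nonneg
    intro y
    exact mul_nonneg (mul_nonneg (Real.rpow_nonneg hs.1 _) (heatKernel_nonneg _ _))
      (heatKernel_nonneg _ _)
  have hL3 : ∀ N : ℝ, 0 ≤ N → ∀ x1 : ℝ,
      (∫ x2 in (0:ℝ)..N, ∫ s in (0:ℝ)..t, ∫ y : ℝ,
        s ^ ((1:ℝ)/4) * heatKernel (s * (t1 - s) / t1) (y - s / t1 * x1) *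
          heatKernel (s * (t2 - s) / t2) (y - s / t2 * x2)) ≤ C := by
    intro N hN x1
    by_cases hI : IntervalIntegrable (fun x2 => ∫ s in (0:ℝ)..t, ∫ y : ℝ,
        s ^ ((1:ℝ)/4) * heatKernel (s * (t1 - s) / t1) (y - s / t1 * x1) *
          heatKernel (s * (t2 - s) / t2) (y - s / t2 * x2)) volume 0 N
    · have h1 : Integrable (fun u : ℝ => psiTot t (x1/t1 - u)) :=
        (psiTot_integrable ht).comp_sub_left _
      have hM : Integrable (fun x2 : ℝ => psiTot t (x1/t1 - x2/t2)) := h1.comp_div ht2.ne'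
      calc (∫ x2 in (0:ℝ)..N, ∫ s in (0:ℝ)..t, ∫ y : ℝ,
            s ^ ((1:ℝ)/4) * heatKernel (s * (t1 - s) / t1) (y - s / t1 * x1) *
              heatKernel (s * (t2 - s) / t2) (y - s / t2 * x2))
          ≤ ∫ x2 in (0:ℝ)..N, psiTot t (x1/t1 - x2/t2) :=
            intervalIntegral.integral_mono_on hN hI hM.intervalIntegrable
              (fun x2 _ => L2_le t1 t2 ht1 ht2 x1 x2)
        _ ≤ ∫ x2 : ℝ, psiTot t (x1/t1 - x2/t2) :=
            intervalIntegral_le_integral hM (fun x2 => psiTot_nonneg ht _) hN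
        _ = |t2| • ∫ u : ℝ, psiTot t (x1/t1 - u) :=
            MeasureTheory.Measure.integral_comp_div (fun u => psiTot t (x1/t1 - u)) t2
        _ = C := by
            rw [hCdef, integral_sub_left_eq_self (psiTot t) volume (x1/t1), smul_eq_mul]
    · rw [intervalIntegral.integral_undef hI]
      exact hC0
  have hL4 : ∀ N : ℝ, 0 ≤ N →
      (∫ x1 in (0:ℝ)..N, ∫ x2 in (0:ℝ)..N, ∫ s in (0:ℝ)..t, ∫ y : ℝ,
        s ^ ((1:ℝ)/4) * heatKernel (s * (t1 - s) / t1) (y - s / t1 * x1) *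
          heatKernel (s * (t2 - s) / t2) (y - s / t2 * x2)) ≤ C * N := by
    intro N hN
    by_cases hI : IntervalIntegrable (fun x1 => ∫ x2 in (0:ℝ)..N, ∫ s in (0:ℝ)..t, ∫ y : ℝ,
        s ^ ((1:ℝ)/4) * heatKernel (s * (t1 - s) / t1) (y - s / t1 * x1) *
          heatKernel (s * (t2 - s) / t2) (y - s / t2 * x2)) volume 0 N
    · calc (∫ x1 in (0:ℝ)..N, ∫ x2 in (0:ℝ)..N, ∫ s in (0:ℝ)..t, ∫ y : ℝ,
            s ^ ((1:ℝ)/4) * heatKernel (s * (t1 - s) / t1) (y - s / t1 * x1) *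
              heatKernel (s * (t2 - s) / t2) (y - s / t2 * x2))
          ≤ ∫ _x1 in (0:ℝ)..N, C :=
            intervalIntegral.integral_mono_on hN hI intervalIntegrable_const
              (fun x1 _ => hL3 N hN x1)
        _ = C * N := by
            rw [intervalIntegral.integral_const, smul_eq_mul, sub_zero, mul_comm]
    · rw [intervalIntegral.integral_undef hI]
      exact mul_nonneg hC0 hN
  have hL4nn : ∀ N : ℝ, 0 ≤ N →
      0 ≤ ∫ x1 in (0:ℝ)..N, ∫ x2 in (0:ℝ)..N, ∫ s in (0:ℝ)..t, ∫ y : ℝ,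
        s ^ ((1:ℝ)/4) * heatKernel (s * (t1 - s) / t1) (y - s / t1 * x1) *
          heatKernel (s * (t2 - s) / t2) (y - s / t2 * x2) := by
    intro N hN
    apply intervalIntegral.integral_nonneg hN
    intro x1 _
    apply intervalIntegral.integral_nonneg hN
    intro x2 _
    exact hL2nn x1 x2
  apply tendsto_of_tendsto_of_tendsto_of_le_of_le' (g := fun _ : ℝ => (0:ℝ))
    (h := fun N : ℝ => C / Real.log N)
  · exact tendsto_const_nhds
  · exact Tendsto.div_atTop tendsto_const_nhds Real.tendsto_log_atTop
  · filter_upwards [eventually_ge_atTop (2:ℝ)] with N hN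
    have hN0 : (0:ℝ) < N := by linarith
    have hlog : 0 < Real.log N := Real.log_pos (by linarith)
    exact mul_nonneg (by positivity) (hL4nn N hN0.le)
  · filter_upwards [eventually_ge_atTop (2:ℝ)] with N hN
    have hN0 : (0:ℝ) < N := by linarith
    have hlog : 0 < Real.log N := Real.log_pos (by linarith)
    calc (1 / (N * Real.log N)) *
          (∫ x1 in (0:ℝ)..N, ∫ x2 in (0:ℝ)..N, ∫ s in (0:ℝ)..t, ∫ y : ℝ,
            s ^ ((1:ℝ)/4) * heatKernel (s * (t1 - s) / t1) (y - s / t1 * x1) *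
              heatKernel (s * (t2 - s) / t2) (y - s / t2 * x2))
        ≤ (1 / (N * Real.log N)) * (C * N) :=
          mul_le_mul_of_nonneg_left (hL4 N hN0.le) (by positivity)
      _ = C / Real.log N := by
          field_simp
end

section
/- Fix t1, t2 > 0. Then the limit as N → ∞ of (1/(N log N)) · ∫_{[0,N]²} dx1 dx2 ∫_0^{(t1∧t2)/N²} (ds/s) · p_{(t1-s)/(t1 s) + (t2-s)/(t2 s)}(x1/t1 - x2/t2) equals 0. -/
open MeasureTheory Real Filter

theorem stmt_1 (t1 t2 : ℝ) (ht1 : 0 < t1) (ht2 : 0 < t2) :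
    Tendsto (fun N : ℝ =>
      (1 / (N * Real.log N)) *
        ∫ x1 in (0:ℝ)..N, ∫ x2 in (0:ℝ)..N, ∫ s in (0:ℝ)..(min t1 t2 / N ^ 2),
          (1 / s) * heatKernel ((t1 - s) / (t1 * s) + (t2 - s) / (t2 * s)) (x1 / t1 - x2 / t2))
      atTop (nhds 0) := by
  set m := min t1 t2 with hmdef
  have hm0 : 0 < m := lt_min ht1 ht2
  have hpi : (0:ℝ) < Real.sqrt (2 * Real.pi) := Real.sqrt_pos.mpr (by positivity)
  set C : ℝ := 2 * Real.sqrt m / Real.sqrt (2 * Real.pi) with hCdef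
  have hC0 : 0 ≤ C := by positivity
  have key : ∀ᶠ N : ℝ in atTop,
      ‖(1 / (N * Real.log N)) *
        ∫ x1 in (0:ℝ)..N, ∫ x2 in (0:ℝ)..N, ∫ s in (0:ℝ)..(m / N ^ 2),
          (1 / s) * heatKernel ((t1 - s) / (t1 * s) + (t2 - s) / (t2 * s)) (x1 / t1 - x2 / t2)‖
        ≤ C / Real.log N := by
    filter_upwards [eventually_ge_atTop (2:ℝ)] with N hN
    have hN0 : (0:ℝ) < N := by linarith
    have hlog : 0 < Real.log N := Real.log_pos (by linarith)
    set a : ℝ := m / N ^ 2 with hadef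
    have ha0 : 0 < a := by positivity
    -- pointwise bound on the inner s-integral, uniform in x
    have hbound : ∀ x : ℝ,
        ‖∫ s in (0:ℝ)..a, (1 / s) *
            heatKernel ((t1 - s) / (t1 * s) + (t2 - s) / (t2 * s)) x‖ ≤ C / N := by
      intro x
      have hInt : IntervalIntegrable (fun s : ℝ => (Real.sqrt (2 * Real.pi))⁻¹ * s ^ (-(1/2) : ℝ))
          volume 0 a := (intervalIntegral.intervalIntegrable_rpow' (by norm_num)).const_mul _
      have hle : ∀ᵐ s ∂(volume.restrict (Set.uIoc (0:ℝ) a)),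
          ‖(1 / s) * heatKernel ((t1 - s) / (t1 * s) + (t2 - s) / (t2 * s)) x‖
            ≤ (Real.sqrt (2 * Real.pi))⁻¹ * s ^ (-(1/2) : ℝ) := by
        refine ae_restrict_of_forall_mem measurableSet_uIoc ?_
        intro s hs
        rw [Set.uIoc_of_le ha0.le] at hs
        have hs0 : 0 < s := hs.1
        have hsa : s ≤ a := hs.2
        have hss : 0 < Real.sqrt s := Real.sqrt_pos.mpr hs0
        set A : ℝ := (t1 - s) / (t1 * s) + (t2 - s) / (t2 * s) with hAdef
        have hsum : s * (1 / t1 + 1 / t2) ≤ 1 := by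
          have h2 : m / t1 ≤ 1 := (div_le_one ht1).mpr (min_le_left _ _)
          have h3 : m / t2 ≤ 1 := (div_le_one ht2).mpr (min_le_right _ _)
          have h4 : s * (1 / t1 + 1 / t2) ≤ (m / N ^ 2) * (1 / t1 + 1 / t2) :=
            mul_le_mul_of_nonneg_right hsa (by positivity)
          have h5 : (m / N ^ 2) * (1 / t1 + 1 / t2) = (m / t1 + m / t2) / N ^ 2 := by
            field_simp
          have h6 : (m / t1 + m / t2) / N ^ 2 ≤ 2 / N ^ 2 := by
            gcongr <;> linarith
          have h7 : (2:ℝ) / N ^ 2 ≤ 1 := by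
            rw [div_le_one (by positivity)]; nlinarith
          calc s * (1 / t1 + 1 / t2) ≤ (m / t1 + m / t2) / N ^ 2 := h5 ▸ h4
            _ ≤ 2 / N ^ 2 := h6
            _ ≤ 1 := h7
        have hA : 1 / s ≤ A := by
          rw [hAdef, div_add_div _ _ (by positivity : (t1 * s) ≠ 0) (by positivity : (t2 * s) ≠ 0),
            div_le_div_iff₀ hs0 (by positivity)]
          have hsum' : s * (t2 + t1) ≤ t1 * t2 := by
            have h := mul_le_mul_of_nonneg_right hsum (by positivity : (0:ℝ) ≤ t1 * t2)
            calc s * (t2 + t1) = s * (1 / t1 + 1 / t2) * (t1 * t2) := by field_simp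
              _ ≤ 1 * (t1 * t2) := h
              _ = t1 * t2 := one_mul _
          nlinarith [mul_le_mul_of_nonneg_left hsum' (sq_nonneg s), hs0.le]
        have hA0 : 0 < A := lt_of_lt_of_le (by positivity) hA
        -- heat kernel bound
        have hk : heatKernel A x ≤ Real.sqrt s / Real.sqrt (2 * Real.pi) := by
          unfold heatKernel
          have he : Real.exp (-x ^ 2 / (2 * A)) ≤ 1 := by
            rw [Real.exp_le_one_iff]
            exact div_nonpos_of_nonpos_of_nonneg (neg_nonpos.mpr (by positivity)) (by positivity)
          have hsq : Real.sqrt (2 * Real.pi / s) ≤ Real.sqrt (2 * Real.pi * A) := by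
            apply Real.sqrt_le_sqrt
            rw [div_le_iff₀ hs0]
            calc 2 * Real.pi = 2 * Real.pi * ((1 / s) * s) := by field_simp
              _ ≤ 2 * Real.pi * (A * s) :=
                  mul_le_mul_of_nonneg_left
                    (mul_le_mul_of_nonneg_right hA hs0.le) (by positivity)
              _ = 2 * Real.pi * A * s := by ring
          have hsq0 : 0 < Real.sqrt (2 * Real.pi / s) := Real.sqrt_pos.mpr (by positivity)
          calc Real.exp (-x ^ 2 / (2 * A)) / Real.sqrt (2 * Real.pi * A)
              ≤ 1 / Real.sqrt (2 * Real.pi / s) :=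
                div_le_div₀ zero_le_one he hsq0 hsq
            _ = Real.sqrt s / Real.sqrt (2 * Real.pi) := by
                rw [Real.sqrt_div (by positivity), one_div_div]
        have hk0 : 0 ≤ heatKernel A x := by
          unfold heatKernel; positivity
        have hnorm : ‖(1 / s) * heatKernel A x‖ = (1 / s) * heatKernel A x := by
          rw [Real.norm_eq_abs, abs_of_nonneg (by positivity)]
        rw [hnorm]
        have hrw : (Real.sqrt (2 * Real.pi))⁻¹ * s ^ (-(1/2) : ℝ)
            = (1 / s) * (Real.sqrt s / Real.sqrt (2 * Real.pi)) := by
          rw [Real.rpow_neg hs0.le, ← Real.sqrt_eq_rpow]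
          have hms : Real.sqrt s * Real.sqrt s = s := Real.mul_self_sqrt hs0.le
          field_simp
          linear_combination (-1 : ℝ) * hms
        rw [hrw]
        exact mul_le_mul_of_nonneg_left hk (by positivity)
      have h1 := intervalIntegral.norm_integral_le_abs_of_norm_le hle hInt
      refine h1.trans ?_
      have hcomp : ∫ s in (0:ℝ)..a, (Real.sqrt (2 * Real.pi))⁻¹ * s ^ (-(1/2) : ℝ) = C / N := by
        rw [intervalIntegral.integral_const_mul, integral_rpow (Or.inl (by norm_num))]
        have h0 : (0:ℝ) ^ ((-(1/2) : ℝ) + 1) = 0 := by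
          rw [Real.zero_rpow (by norm_num)]
        have ha' : a ^ ((-(1/2) : ℝ) + 1) = Real.sqrt a := by
          rw [show (-(1/2) : ℝ) + 1 = 1/2 by norm_num, ← Real.sqrt_eq_rpow]
        rw [h0, ha']
        have hsa : Real.sqrt a = Real.sqrt m / N := by
          rw [hadef, Real.sqrt_div hm0.le, show (N:ℝ) ^ 2 = N * N by ring,
            Real.sqrt_mul_self hN0.le]
        rw [hsa, hCdef]
        field_simp
        ring
      rw [hcomp, abs_of_nonneg (by positivity)]
    -- now bound the double x-integral
    have hx2 : ∀ x1 : ℝ,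
        ‖∫ x2 in (0:ℝ)..N, ∫ s in (0:ℝ)..a,
            (1 / s) * heatKernel ((t1 - s) / (t1 * s) + (t2 - s) / (t2 * s)) (x1 / t1 - x2 / t2)‖
          ≤ (C / N) * |N - 0| := by
      intro x1
      exact intervalIntegral.norm_integral_le_of_norm_le_const fun x2 _ => hbound _
    have hx1 : ‖∫ x1 in (0:ℝ)..N, ∫ x2 in (0:ℝ)..N, ∫ s in (0:ℝ)..a,
          (1 / s) * heatKernel ((t1 - s) / (t1 * s) + (t2 - s) / (t2 * s)) (x1 / t1 - x2 / t2)‖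
        ≤ ((C / N) * |N - 0|) * |N - 0| :=
      intervalIntegral.norm_integral_le_of_norm_le_const fun x1 _ => hx2 x1
    rw [norm_mul, Real.norm_eq_abs (1 / (N * Real.log N)),
      abs_of_nonneg (by positivity : (0:ℝ) ≤ 1 / (N * Real.log N))]
    have habs : |N - (0:ℝ)| = N := by rw [sub_zero, abs_of_nonneg hN0.le]
    rw [habs] at hx1
    calc (1 / (N * Real.log N)) * ‖_‖ ≤ (1 / (N * Real.log N)) * ((C / N) * N * N) :=
          mul_le_mul_of_nonneg_left hx1 (by positivity)
      _ = C / Real.log N := by field_simp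
  refine squeeze_zero_norm' key ?_
  have h1 : Tendsto (fun N : ℝ => (Real.log N)⁻¹) atTop (nhds 0) :=
    tendsto_inv_atTop_zero.comp Real.tendsto_log_atTop
  have h2 := h1.const_mul C
  simpa [div_eq_mul_inv] using h2
end

section
/- Fix t > 0. Then the limit as x → ∞ of x · ∫_0^t p_{2s(t-s)/t}(s·x/t) ds equals t. -/
open MeasureTheory Real Filter

open Set Topology

lemma hk_eq {t x u : ℝ} (ht : 0 < t) (hx : 0 < x) (hu : 0 < u)
    (hst : 4 * t ^ 2 * u / x ^ 2 < t) :
    x * (4 * t ^ 2 / x ^ 2) *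
      heatKernel (2 * (4 * t ^ 2 * u / x ^ 2) * (t - 4 * t ^ 2 * u / x ^ 2) / t)
        ((4 * t ^ 2 * u / x ^ 2) * x / t)
    = t * Real.exp (-(t * u / (t - 4 * t ^ 2 * u / x ^ 2))) /
        (Real.sqrt u * Real.sqrt (π * (t - 4 * t ^ 2 * u / x ^ 2) / t)) := by
  set s : ℝ := 4 * t ^ 2 * u / x ^ 2 with hs
  have hs0 : 0 < s := by positivity
  have hd : 0 < t - s := by linarith
  have hden : (0:ℝ) < 2 * (2 * s * (t - s) / t) := by positivity
  have hexp : -((s * x / t) ^ 2) / (2 * (2 * s * (t - s) / t)) = -(t * u / (t - s)) := by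
    rw [neg_div, neg_inj, div_eq_div_iff hden.ne' hd.ne', hs]
    have hx2 : x ^ 2 ≠ 0 := by positivity
    field_simp
    ring
  have hb : (0:ℝ) ≤ π * (t - s) / t := by positivity
  have hsq : Real.sqrt (2 * π * (2 * s * (t - s) / t))
      = 4 * t * Real.sqrt u * Real.sqrt (π * (t - s) / t) / x := by
    have h1 : 2 * π * (2 * s * (t - s) / t)
        = (4 * t * Real.sqrt u * Real.sqrt (π * (t - s) / t) / x) ^ 2 := by
      have ha : Real.sqrt u ^ 2 = u := Real.sq_sqrt hu.le
      have hb' : Real.sqrt (π * (t - s) / t) ^ 2 = π * (t - s) / t := Real.sq_sqrt hb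
      have : (4 * t * Real.sqrt u * Real.sqrt (π * (t - s) / t) / x) ^ 2
          = 16 * t ^ 2 * (Real.sqrt u ^ 2) * (Real.sqrt (π * (t - s) / t) ^ 2) / x ^ 2 := by
        ring
      rw [this, ha, hb']
      rw [hs]
      have hx2 : x ^ 2 ≠ 0 := by positivity
      field_simp
      ring
    rw [h1, Real.sqrt_sq (by positivity)]
  show x * (4 * t ^ 2 / x ^ 2) *
      (Real.exp (-((s * x / t) ^ 2) / (2 * (2 * s * (t - s) / t))) /
        Real.sqrt (2 * π * (2 * s * (t - s) / t))) = _
  rw [hexp, hsq]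
  have h1 : Real.sqrt u ≠ 0 := by positivity
  have h2 : Real.sqrt (π * (t - s) / t) ≠ 0 := by
    refine (Real.sqrt_pos.mpr ?_).ne'
    positivity
  field_simp

lemma key_bound {t u d : ℝ} (ht : 0 < t) (hu : 0 < u) (hd : 0 < d) (hdt : d < t)
    (hcase : t / 2 ≤ d ∨ 1 ≤ u) :
    Real.sqrt π * Real.exp (-(t * u / d)) ≤ 2 * Real.exp (-u) * Real.sqrt (π * d / t) := by
  have hπ := Real.pi_pos
  have hb : (0:ℝ) ≤ Real.sqrt (π * d / t) := Real.sqrt_nonneg _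
  rcases hcase with hA | hB
  · have h1 : Real.exp (-(t * u / d)) ≤ Real.exp (-u) := by
      apply Real.exp_le_exp.mpr
      have : u ≤ t * u / d := by rw [le_div_iff₀ hd]; nlinarith
      linarith
    have h2 : Real.sqrt π ≤ Real.sqrt 2 * Real.sqrt (π * d / t) := by
      rw [← Real.sqrt_mul (by norm_num)]
      apply Real.sqrt_le_sqrt
      rw [show 2 * (π * d / t) = 2 * π * d / t by ring, le_div_iff₀ ht]
      nlinarith
    have h3 : Real.sqrt 2 ≤ 2 := by
      nlinarith [Real.sq_sqrt (by norm_num : (0:ℝ) ≤ 2), Real.sqrt_nonneg 2]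
    calc Real.sqrt π * Real.exp (-(t * u / d))
        ≤ (Real.sqrt 2 * Real.sqrt (π * d / t)) * Real.exp (-(t * u / d)) := by
          exact mul_le_mul_of_nonneg_right h2 (Real.exp_pos _).le
      _ ≤ (2 * Real.sqrt (π * d / t)) * Real.exp (-(t * u / d)) := by
          have : Real.sqrt 2 * Real.sqrt (π * d / t) ≤ 2 * Real.sqrt (π * d / t) :=
            mul_le_mul_of_nonneg_right h3 hb
          exact mul_le_mul_of_nonneg_right this (Real.exp_pos _).le
      _ ≤ (2 * Real.sqrt (π * d / t)) * Real.exp (-u) :=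
          mul_le_mul_of_nonneg_left h1 (by positivity)
      _ = 2 * Real.exp (-u) * Real.sqrt (π * d / t) := by ring
  · -- 1 ≤ u
    have htd : 0 < t - d := by linarith
    set r : ℝ := u * (t - d) / d with hr
    have hr0 : 0 ≤ r := by positivity
    have hE : Real.exp (-(t * u / d)) = Real.exp (-u) * Real.exp (-r) := by
      rw [← Real.exp_add]
      congr 1
      rw [hr]
      field_simp
      ring
    have hfac : Real.sqrt π = Real.sqrt (π * d / t) * Real.sqrt (t / d) := by
      rw [← Real.sqrt_mul (by positivity)]
      congr 1
      field_simp
    have hsub : Real.sqrt (t / d) ≤ 1 + Real.sqrt r := by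
      have h1 : Real.sqrt (t / d) ≤ 1 + Real.sqrt (t / d - 1) := by
        have h2 : t / d ≤ (1 + Real.sqrt (t / d - 1)) ^ 2 := by
          have := Real.sq_sqrt (show (0:ℝ) ≤ t / d - 1 by
            rw [sub_nonneg, le_div_iff₀ hd]; linarith)
          nlinarith [Real.sqrt_nonneg (t / d - 1)]
        calc Real.sqrt (t / d) ≤ Real.sqrt ((1 + Real.sqrt (t / d - 1)) ^ 2) :=
              Real.sqrt_le_sqrt h2
          _ = 1 + Real.sqrt (t / d - 1) :=
              Real.sqrt_sq (by positivity)
      have h3 : Real.sqrt (t / d - 1) ≤ Real.sqrt r := by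
        apply Real.sqrt_le_sqrt
        rw [hr, show t / d - 1 = (t - d) / d by field_simp]
        have hnum : t - d ≤ u * (t - d) := by nlinarith
        exact (div_le_div_iff_of_pos_right hd).mpr hnum
      linarith
    have hkey : Real.exp (-r) * Real.sqrt (t / d) ≤ 2 := by
      have h4 : Real.sqrt r ≤ 1 + r := by
        nlinarith [Real.sq_sqrt hr0, Real.sqrt_nonneg r]
      have h5 : Real.sqrt r * Real.exp (-r) ≤ 1 := by
        have h6 : Real.sqrt r ≤ Real.exp r := le_trans h4 (by linarith [Real.add_one_le_exp r])
        calc Real.sqrt r * Real.exp (-r) ≤ Real.exp r * Real.exp (-r) :=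
              mul_le_mul_of_nonneg_right h6 (Real.exp_pos _).le
          _ = 1 := by rw [← Real.exp_add]; simp
      have h7 : Real.exp (-r) ≤ 1 := Real.exp_le_one_iff.mpr (by linarith)
      calc Real.exp (-r) * Real.sqrt (t / d) ≤ Real.exp (-r) * (1 + Real.sqrt r) :=
            mul_le_mul_of_nonneg_left hsub (Real.exp_pos _).le
        _ = Real.exp (-r) + Real.sqrt r * Real.exp (-r) := by ring
        _ ≤ 2 := by linarith
    rw [hE, hfac]
    calc Real.sqrt (π * d / t) * Real.sqrt (t / d) * (Real.exp (-u) * Real.exp (-r))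
        = (Real.exp (-u) * Real.sqrt (π * d / t)) * (Real.exp (-r) * Real.sqrt (t / d)) := by
          ring
      _ ≤ (Real.exp (-u) * Real.sqrt (π * d / t)) * 2 :=
          mul_le_mul_of_nonneg_left hkey (by positivity)
      _ = 2 * Real.exp (-u) * Real.sqrt (π * d / t) := by ring

lemma hk_bound {t u d : ℝ} (ht : 0 < t) (hu : 0 < u) (hd : 0 < d) (hdt : d < t)
    (hcase : t / 2 ≤ d ∨ 1 ≤ u) :
    t * Real.exp (-(t * u / d)) / (Real.sqrt u * Real.sqrt (π * d / t))
      ≤ 2 * t / Real.sqrt π * (Real.exp (-u) / Real.sqrt u) := by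
  have hπ := Real.pi_pos
  have ha : 0 < Real.sqrt u := Real.sqrt_pos.mpr hu
  have hb : 0 < Real.sqrt (π * d / t) := Real.sqrt_pos.mpr (by positivity)
  have hsπ : 0 < Real.sqrt π := Real.sqrt_pos.mpr hπ
  have key := key_bound ht hu hd hdt hcase
  have hrhs : 2 * t / Real.sqrt π * (Real.exp (-u) / Real.sqrt u)
      = 2 * t * Real.exp (-u) / (Real.sqrt π * Real.sqrt u) := by ring
  rw [hrhs, div_le_div_iff₀ (by positivity) (by positivity)]
  nlinarith [mul_le_mul_of_nonneg_left key (mul_nonneg ht.le ha.le),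
    (Real.exp_pos (-(t*u/d))).le, (Real.exp_pos (-u)).le]

lemma limit_integral {t : ℝ} (ht : 0 < t) :
    ∫ u in Ioi (0:ℝ), t * Real.exp (-u) / (Real.sqrt u * Real.sqrt π) = t := by
  have hπ := Real.pi_pos
  have h : ∀ u ∈ Ioi (0:ℝ), t * Real.exp (-u) / (Real.sqrt u * Real.sqrt π)
      = (t / Real.sqrt π) * (Real.exp (-u) * u ^ ((1:ℝ)/2 - 1)) := by
    intro u hu
    have hu0 : (0:ℝ) < u := hu
    rw [show (1:ℝ)/2 - 1 = -(1/2) by norm_num, Real.rpow_neg hu0.le,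
      ← Real.sqrt_eq_rpow]
    have h1 : Real.sqrt u ≠ 0 := by positivity
    have h2 : Real.sqrt π ≠ 0 := by positivity
    field_simp
  rw [setIntegral_congr_fun measurableSet_Ioi h, integral_const_mul,
    ← Real.Gamma_eq_integral (by norm_num : (0:ℝ) < 1/2), Real.Gamma_one_half_eq]
  field_simp

lemma bound_integrable {t : ℝ} (ht : 0 < t) :
    IntegrableOn (fun u : ℝ => 2 * t / Real.sqrt π * (Real.exp (-u) / Real.sqrt u))
      (Ioi (0:ℝ)) := by
  have h := (Real.GammaIntegral_convergent (by norm_num : (0:ℝ) < 1/2)).const_mul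
    (2 * t / Real.sqrt π)
  apply IntegrableOn.congr_fun h ?_ measurableSet_Ioi
  intro u hu
  have hu0 : (0:ℝ) < u := hu
  simp only
  rw [show (1:ℝ)/2 - 1 = -(1/2) by norm_num, Real.rpow_neg hu0.le, ← Real.sqrt_eq_rpow]
  ring

/-- The family after the substitution `s = 4t²u/x²`. -/
noncomputable def Fam (t x u : ℝ) : ℝ :=
  (Set.Ioo (0:ℝ) (x ^ 2 / (4 * t))).indicator
    (fun u => x * (4 * t ^ 2 / x ^ 2) *
      heatKernel (2 * (4 * t ^ 2 / x ^ 2 * u) * (t - 4 * t ^ 2 / x ^ 2 * u) / t)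
        (4 * t ^ 2 / x ^ 2 * u * x / t)) u

lemma fam_eq {t x u : ℝ} (ht : 0 < t) (hx : 0 < x) (hu : 0 < u)
    (hux : u < x ^ 2 / (4 * t)) :
    Fam t x u = t * Real.exp (-(t * u / (t - 4 * t ^ 2 * u / x ^ 2))) /
        (Real.sqrt u * Real.sqrt (π * (t - 4 * t ^ 2 * u / x ^ 2) / t)) := by
  have hst : 4 * t ^ 2 * u / x ^ 2 < t := by
    rw [div_lt_iff₀ (by positivity)]
    rw [lt_div_iff₀ (by positivity)] at hux
    nlinarith
  rw [Fam, indicator_of_mem (Set.mem_Ioo.mpr ⟨hu, hux⟩)]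
  rw [show 4 * t ^ 2 / x ^ 2 * u = 4 * t ^ 2 * u / x ^ 2 from by ring]
  exact hk_eq ht hx hu hst

lemma fam_meas (t x : ℝ) : AEStronglyMeasurable (Fam t x) (volume.restrict (Ioi (0:ℝ))) := by
  apply Measurable.aestronglyMeasurable
  apply Measurable.indicator ?_ measurableSet_Ioo
  unfold heatKernel
  apply Measurable.const_mul
  apply Measurable.div
  · apply Real.measurable_exp.comp
    apply Measurable.div
    · fun_prop
    · fun_prop
  · apply Real.continuous_sqrt.measurable.comp
    fun_prop

theorem stmt_7 (t : ℝ) (ht : 0 < t) :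
    Tendsto (fun x : ℝ =>
      x * ∫ s in (0:ℝ)..t, heatKernel (2 * s * (t - s) / t) (s * x / t))
      atTop (nhds t) := by
  have hπ := Real.pi_pos
  -- Step 1: eventual equality with the integral of `Fam`
  have hEq : ∀ᶠ x in atTop, ∫ u in Ioi (0:ℝ), Fam t x u
      = x * ∫ s in (0:ℝ)..t, heatKernel (2 * s * (t - s) / t) (s * x / t) := by
    filter_upwards [eventually_gt_atTop 0] with x hx
    have hc : (4 * t ^ 2 / x ^ 2) ≠ 0 := by positivity
    have hB : (0:ℝ) ≤ x ^ 2 / (4 * t) := by positivity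
    have hct : 4 * t ^ 2 / x ^ 2 * (x ^ 2 / (4 * t)) = t := by
      field_simp
    calc ∫ u in Ioi (0:ℝ), Fam t x u
        = ∫ u in Ioi (0:ℝ) ∩ Ioo (0:ℝ) (x ^ 2 / (4 * t)),
            x * (4 * t ^ 2 / x ^ 2) *
              heatKernel (2 * (4 * t ^ 2 / x ^ 2 * u) * (t - 4 * t ^ 2 / x ^ 2 * u) / t)
                (4 * t ^ 2 / x ^ 2 * u * x / t) := by
          rw [← setIntegral_indicator measurableSet_Ioo]
          rfl
      _ = ∫ u in Ioo (0:ℝ) (x ^ 2 / (4 * t)),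
            x * (4 * t ^ 2 / x ^ 2) *
              heatKernel (2 * (4 * t ^ 2 / x ^ 2 * u) * (t - 4 * t ^ 2 / x ^ 2 * u) / t)
                (4 * t ^ 2 / x ^ 2 * u * x / t) := by
          rw [inter_eq_self_of_subset_right Ioo_subset_Ioi_self]
      _ = ∫ u in (0:ℝ)..(x ^ 2 / (4 * t)),
            x * (4 * t ^ 2 / x ^ 2) *
              heatKernel (2 * (4 * t ^ 2 / x ^ 2 * u) * (t - 4 * t ^ 2 / x ^ 2 * u) / t)
                (4 * t ^ 2 / x ^ 2 * u * x / t) := by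
          rw [intervalIntegral.integral_of_le hB, integral_Ioc_eq_integral_Ioo]
      _ = (x * (4 * t ^ 2 / x ^ 2)) * ∫ u in (0:ℝ)..(x ^ 2 / (4 * t)),
            heatKernel (2 * (4 * t ^ 2 / x ^ 2 * u) * (t - 4 * t ^ 2 / x ^ 2 * u) / t)
                (4 * t ^ 2 / x ^ 2 * u * x / t) := by
          rw [intervalIntegral.integral_const_mul]
      _ = (x * (4 * t ^ 2 / x ^ 2)) * ((4 * t ^ 2 / x ^ 2)⁻¹ •
            ∫ s in (4 * t ^ 2 / x ^ 2 * 0)..(4 * t ^ 2 / x ^ 2 * (x ^ 2 / (4 * t))),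
              heatKernel (2 * s * (t - s) / t) (s * x / t)) := by
          rw [intervalIntegral.integral_comp_mul_left
            (fun s => heatKernel (2 * s * (t - s) / t) (s * x / t)) hc]
      _ = x * ∫ s in (0:ℝ)..t, heatKernel (2 * s * (t - s) / t) (s * x / t) := by
          rw [mul_zero, hct, smul_eq_mul, mul_assoc,
            ← mul_assoc (4 * t ^ 2 / x ^ 2), mul_inv_cancel₀ hc, one_mul]
  -- Step 2: dominated convergence
  have hDCT : Tendsto (fun x : ℝ => ∫ u in Ioi (0:ℝ), Fam t x u) atTop
      (𝓝 (∫ u in Ioi (0:ℝ), t * Real.exp (-u) / (Real.sqrt u * Real.sqrt π))) := by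
    apply tendsto_integral_filter_of_dominated_convergence
      (fun u : ℝ => 2 * t / Real.sqrt π * (Real.exp (-u) / Real.sqrt u))
    · exact Eventually.of_forall (fun x => fam_meas t x)
    · filter_upwards [eventually_ge_atTop (max 1 (Real.sqrt (8 * t)))] with x hx
      have hx1 : (1:ℝ) ≤ x := le_trans (le_max_left _ _) hx
      have hx0 : (0:ℝ) < x := by linarith
      have hx8 : 8 * t ≤ x ^ 2 := by
        have h := le_trans (le_max_right _ _) hx
        nlinarith [Real.sq_sqrt (show (0:ℝ) ≤ 8 * t by positivity),
          Real.sqrt_nonneg (8 * t)]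
      rw [ae_restrict_iff' measurableSet_Ioi]
      filter_upwards with u hu
      have hu0 : (0:ℝ) < u := hu
      by_cases hmem : u < x ^ 2 / (4 * t)
      · rw [fam_eq ht hx0 hu0 hmem]
        have hs0 : 0 < 4 * t ^ 2 * u / x ^ 2 := by positivity
        have hst : 4 * t ^ 2 * u / x ^ 2 < t := by
          rw [div_lt_iff₀ (by positivity)]
          rw [lt_div_iff₀ (by positivity)] at hmem
          nlinarith
        have hd : 0 < t - 4 * t ^ 2 * u / x ^ 2 := by linarith
        have hdt : t - 4 * t ^ 2 * u / x ^ 2 < t := by linarith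
        rw [Real.norm_of_nonneg (by positivity)]
        apply hk_bound ht hu0 hd hdt
        rcases le_or_gt u (x ^ 2 / (8 * t)) with hcase | hcase
        · left
          have : 4 * t ^ 2 * u / x ^ 2 ≤ t / 2 := by
            rw [div_le_div_iff₀ (by positivity) (by norm_num)]
            rw [le_div_iff₀ (by positivity)] at hcase
            nlinarith
          linarith
        · right
          have : (1:ℝ) ≤ x ^ 2 / (8 * t) := by
            rw [le_div_iff₀ (by positivity)]
            linarith
          linarith
      · rw [Fam, indicator_of_notMem (by
          intro h
          exact hmem h.2), norm_zero]
        positivity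
    · exact bound_integrable ht
    · rw [ae_restrict_iff' measurableSet_Ioi]
      filter_upwards with u
      intro hu
      have hu0 : (0:ℝ) < u := hu
      have hsx : Tendsto (fun x : ℝ => 4 * t ^ 2 * u / x ^ 2) atTop (𝓝 0) := by
        have h1 : Tendsto (fun x : ℝ => x ^ 2) atTop atTop :=
          tendsto_pow_atTop (by norm_num)
        have h2 := h1.inv_tendsto_atTop
        have h3 := h2.const_mul (4 * t ^ 2 * u)
        rw [mul_zero] at h3
        refine h3.congr (fun x => ?_)
        simp [div_eq_mul_inv]
      have hcont : ContinuousAt (fun s : ℝ =>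
          t * Real.exp (-(t * u / (t - s))) /
            (Real.sqrt u * Real.sqrt (π * (t - s) / t))) 0 := by
        have hts : ContinuousAt (fun s : ℝ => t - s) 0 := by fun_prop
        apply ContinuousAt.div
        · apply continuousAt_const.mul
          apply Real.continuous_exp.continuousAt.comp
          apply ContinuousAt.neg
          exact ContinuousAt.div continuousAt_const hts (by simpa using ht.ne')
        · apply continuousAt_const.mul
          apply Real.continuous_sqrt.continuousAt.comp
          exact ContinuousAt.div (continuousAt_const.mul hts) continuousAt_const ht.ne'
        · have h1 : (fun s : ℝ => t - s) 0 = t := by simp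
          simp only [h1]
          have : Real.sqrt (π * t / t) = Real.sqrt π := by
            rw [mul_div_assoc, div_self ht.ne', mul_one]
          positivity
      have hφ := hcont.tendsto.comp hsx
      have hφ0 : t * Real.exp (-(t * u / (t - 0))) /
          (Real.sqrt u * Real.sqrt (π * (t - 0) / t))
          = t * Real.exp (-u) / (Real.sqrt u * Real.sqrt π) := by
        rw [sub_zero, show t * u / t = u from by field_simp,
          show π * t / t = π from by field_simp]
      rw [hφ0] at hφ
      apply hφ.congr'
      filter_upwards [eventually_gt_atTop 0,
        eventually_gt_atTop (Real.sqrt (4 * t * u))] with x hx0 hxB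
      have hux : u < x ^ 2 / (4 * t) := by
        rw [lt_div_iff₀ (by positivity)]
        nlinarith [Real.sq_sqrt (show (0:ℝ) ≤ 4 * t * u by positivity),
          Real.sqrt_nonneg (4 * t * u)]
      exact (fam_eq ht hx0 hu0 hux).symm
  rw [limit_integral ht] at hDCT
  exact hDCT.congr' hEq
end

section
/- For every a > 0, one has ∫_0^1 (1/r) · exp(-a·(1-r)/r) dr = e^a · ∫_a^∞ e^{-s}/s ds, and this quantity is at most e · log(e + e/a). -/
open MeasureTheory Real Filter

lemma my_image (a : ℝ) (ha : 0 < a) :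
    (fun s : ℝ => a / s) '' Set.Ioi a = Set.Ioo 0 1 := by
  ext r
  constructor
  · rintro ⟨s, hs, rfl⟩
    have hs0 : 0 < s := ha.trans hs
    constructor
    · positivity
    · rw [div_lt_one hs0]; exact hs
  · rintro ⟨hr0, hr1⟩
    refine ⟨a / r, ?_, ?_⟩
    · simpa using (lt_div_iff₀ hr0).2 (by nlinarith)
    · field_simp

set_option maxHeartbeats 1000000 in
lemma my_integrable (a : ℝ) (ha : 0 < a) :
    IntegrableOn (fun s : ℝ => Real.exp (-s) / s) (Set.Ioi a) := by
  have h1 : IntegrableOn (fun s : ℝ => Real.exp (-(1 : ℝ) * s) / a) (Set.Ioi a) :=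
    ((exp_neg_integrableOn_Ioi a one_pos).div_const a)
  refine MeasureTheory.Integrable.mono h1 ?_ ?_
  · apply ContinuousOn.aestronglyMeasurable
    · exact ContinuousOn.div (Real.continuous_exp.comp continuous_neg).continuousOn
        continuousOn_id (fun x hx => ne_of_gt (ha.trans hx))
    · exact measurableSet_Ioi
  · filter_upwards [ae_restrict_mem measurableSet_Ioi] with s hs
    have hs0 : 0 < s := ha.trans hs
    rw [Real.norm_eq_abs, Real.norm_eq_abs, abs_div, abs_of_pos (exp_pos _),
      abs_of_pos hs0, abs_of_pos (by positivity : (0:ℝ) < exp (-(1:ℝ)*s) / a)]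
    rw [neg_one_mul]
    exact div_le_div_of_nonneg_left (exp_pos _).le ha (le_of_lt hs)

lemma my_eq (a : ℝ) (ha : 0 < a) :
    ∫ r in (0:ℝ)..1, (1 / r) * Real.exp (-a * (1 - r) / r) =
        Real.exp a * ∫ s in Set.Ioi a, Real.exp (-s) / s := by
  have hane : a ≠ 0 := ne_of_gt ha
  rw [intervalIntegral.integral_of_le zero_le_one, integral_Ioc_eq_integral_Ioo,
    ← my_image a ha]
  rw [integral_image_eq_integral_abs_deriv_smul measurableSet_Ioi
    (f' := fun s => a * (-(s^2)⁻¹))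
    (fun s hs => ((hasDerivAt_inv (ne_of_gt (ha.trans hs))).const_mul a).hasDerivWithinAt.congr
      (fun x _ => by rw [div_eq_mul_inv]) (by rw [div_eq_mul_inv]))
    (fun s hs t ht h => by
      have hs0 : (0:ℝ) < s := ha.trans hs
      have ht0 : (0:ℝ) < t := ha.trans ht
      field_simp at h
      linarith)]
  rw [← integral_const_mul]
  refine setIntegral_congr_fun measurableSet_Ioi (fun s hs => ?_)
  have hs0 : (0:ℝ) < s := ha.trans hs
  have hsne : s ≠ 0 := ne_of_gt hs0
  rw [smul_eq_mul, abs_mul, abs_of_pos ha, abs_neg, abs_inv,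
    abs_of_pos (by positivity : (0:ℝ) < s^2)]
  have hexp : -a * (1 - a / s) / (a / s) = a - s := by field_simp; ring
  rw [hexp, Real.exp_sub]
  have he : Real.exp (-s) * Real.exp s = 1 := by rw [← Real.exp_add]; simp
  field_simp
  nlinarith [mul_pos (mul_pos ha (pow_pos hs0 2)) (exp_pos a)]

theorem stmt_9 (a : ℝ) (ha : 0 < a) :
    (∫ r in (0:ℝ)..1, (1 / r) * Real.exp (-a * (1 - r) / r) =
        Real.exp a * ∫ s in Set.Ioi a, Real.exp (-s) / s)
    ∧ Real.exp a * (∫ s in Set.Ioi a, Real.exp (-s) / s) ≤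
        Real.exp 1 * Real.log (Real.exp 1 + Real.exp 1 / a) := by
  refine ⟨my_eq a ha, ?_⟩
  have hint := my_integrable a ha
  have he1 : (1:ℝ) ≤ Real.exp 1 := by
    calc (1:ℝ) = Real.exp 0 := (Real.exp_zero).symm
      _ ≤ Real.exp 1 := Real.exp_le_exp.2 zero_le_one
  have hlog : Real.log (Real.exp 1 + Real.exp 1 / a) = 1 + Real.log (1 + 1/a) := by
    have h : Real.exp 1 + Real.exp 1 / a = Real.exp 1 * (1 + 1/a) := by ring
    rw [h, Real.log_mul (by positivity) (by positivity), Real.log_exp]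
  have hlognn : (0:ℝ) ≤ Real.log (1 + 1/a) :=
    Real.log_nonneg (by nlinarith [one_div_pos.mpr ha])
  rcases le_or_gt 1 a with h1 | h1
  · -- a ≥ 1
    have hbound : (∫ s in Set.Ioi a, Real.exp (-s) / s) ≤ Real.exp (-a) / a := by
      have hle : (∫ s in Set.Ioi a, Real.exp (-s) / s) ≤ ∫ s in Set.Ioi a, Real.exp (-s) / a := by
        refine setIntegral_mono_on hint ?_ measurableSet_Ioi ?_
        · have := (exp_neg_integrableOn_Ioi a one_pos).div_const a
          simpa [neg_one_mul, IntegrableOn] using this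
        · intro s hs
          exact div_le_div_of_nonneg_left (exp_pos _).le ha (le_of_lt hs)
      calc (∫ s in Set.Ioi a, Real.exp (-s) / s) ≤ ∫ s in Set.Ioi a, Real.exp (-s) / a := hle
        _ = (∫ s in Set.Ioi a, Real.exp (-s)) / a := by rw [integral_div]
        _ = Real.exp (-a) / a := by rw [integral_exp_neg_Ioi]
    have h2 : Real.exp a * (∫ s in Set.Ioi a, Real.exp (-s) / s) ≤ 1 / a := by
      calc Real.exp a * (∫ s in Set.Ioi a, Real.exp (-s) / s)
          ≤ Real.exp a * (Real.exp (-a) / a) :=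
            mul_le_mul_of_nonneg_left hbound (exp_pos _).le
        _ = 1 / a := by rw [← mul_div_assoc, ← Real.exp_add]; simp
    have h3 : (1:ℝ)/a ≤ 1 := by rw [div_le_one ha]; exact h1
    have h4 : (1:ℝ) ≤ Real.exp 1 * Real.log (Real.exp 1 + Real.exp 1 / a) := by
      rw [hlog]; nlinarith
    linarith
  · -- a < 1 : split the integral
    have hsplit : Set.Ioi a = Set.Ioc a 1 ∪ Set.Ioi 1 := by
      rw [Set.Ioc_union_Ioi_eq_Ioi h1.le]
    have hi1 : IntegrableOn (fun s : ℝ => Real.exp (-s) / s) (Set.Ioc a 1) :=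
      hint.mono_set (by rw [hsplit]; exact Set.subset_union_left)
    have hi2 : IntegrableOn (fun s : ℝ => Real.exp (-s) / s) (Set.Ioi 1) :=
      hint.mono_set (by rw [hsplit]; exact Set.subset_union_right)
    have hsum : (∫ s in Set.Ioi a, Real.exp (-s) / s)
        = (∫ s in Set.Ioc a 1, Real.exp (-s) / s) + ∫ s in Set.Ioi 1, Real.exp (-s) / s := by
      rw [hsplit]
      exact setIntegral_union (Set.Ioc_disjoint_Ioi le_rfl) measurableSet_Ioi hi1 hi2
    have hS0 : (0:ℝ) ≤ ∫ s in Set.Ioi a, Real.exp (-s) / s := by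
      refine setIntegral_nonneg measurableSet_Ioi (fun s hs => ?_)
      have : 0 < s := ha.trans hs
      positivity
    -- bound first piece by -log a
    have hone_div_int : IntegrableOn (fun s : ℝ => 1 / s) (Set.Ioc a 1) := by
      refine (ContinuousOn.integrableOn_compact isCompact_Icc ?_).mono_set Set.Ioc_subset_Icc_self
      exact ContinuousOn.div continuousOn_const continuousOn_id
        (fun x hx => ne_of_gt (lt_of_lt_of_le ha hx.1))
    have hb1 : (∫ s in Set.Ioc a 1, Real.exp (-s) / s) ≤ -Real.log a := by
      have hle : (∫ s in Set.Ioc a 1, Real.exp (-s) / s) ≤ ∫ s in Set.Ioc a 1, 1 / s := by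
        refine setIntegral_mono_on hi1 hone_div_int measurableSet_Ioc (fun s hs => ?_)
        have hs0 : 0 < s := ha.trans hs.1
        have : Real.exp (-s) ≤ 1 := Real.exp_le_one_iff.2 (by linarith)
        gcongr
      have heval : (∫ s in Set.Ioc a 1, (1:ℝ) / s) = -Real.log a := by
        rw [← intervalIntegral.integral_of_le h1.le,
          integral_one_div (by
            intro hmem
            rw [Set.uIcc_of_le h1.le] at hmem
            exact absurd hmem.1 (not_le.2 ha)),
          Real.log_div one_ne_zero (ne_of_gt ha), Real.log_one, zero_sub]
      linarith
    -- bound second piece by exp(-1)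
    have hb2 : (∫ s in Set.Ioi 1, Real.exp (-s) / s) ≤ Real.exp (-1) := by
      have hle : (∫ s in Set.Ioi 1, Real.exp (-s) / s) ≤ ∫ s in Set.Ioi 1, Real.exp (-s) := by
        refine setIntegral_mono_on hi2 ?_ measurableSet_Ioi (fun s hs => ?_)
        · have := exp_neg_integrableOn_Ioi 1 one_pos
          simpa [neg_one_mul] using this
        · have hs1 : (1:ℝ) < s := hs
          calc Real.exp (-s) / s ≤ Real.exp (-s) / 1 :=
              div_le_div_of_nonneg_left (exp_pos _).le one_pos hs1.le
            _ = Real.exp (-s) := by ring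
      rw [integral_exp_neg_Ioi] at hle
      exact hle
    have hS : (∫ s in Set.Ioi a, Real.exp (-s) / s) ≤ -Real.log a + Real.exp (-1) := by
      rw [hsum]; linarith
    have hea : Real.exp a ≤ Real.exp 1 := Real.exp_le_exp.2 h1.le
    have hstep : Real.exp a * (∫ s in Set.Ioi a, Real.exp (-s) / s)
        ≤ Real.exp 1 * (-Real.log a + Real.exp (-1)) := by
      refine mul_le_mul hea hS hS0 (exp_pos _).le |>.trans_eq rfl
    have hee : Real.exp 1 * Real.exp (-1) = 1 := by rw [← Real.exp_add]; simp
    have hlog2 : Real.log (1/a) ≤ Real.log (1 + 1/a) :=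
      Real.log_le_log (by positivity) (by linarith)
    have hloginv : Real.log (1/a) = -Real.log a := by
      rw [one_div, Real.log_inv]
    rw [hlog]
    nlinarith
end

section
/- For all a, b > 0 and σ > 0, one has ∫_0^a ∫_0^b p_σ(x - y) dy dx = (1/(2π)) · ∫_ℝ ((e^{iaz} - 1)(e^{-ibz} - 1)/z²) · exp(-σ z²/2) dz, where the right-hand side is a real number (the integrand's imaginary part integrates to zero). -/
open MeasureTheory Real Filter Complex

lemma gauss_int {σ : ℝ} (hσ : 0 < σ) :
    Integrable (fun z : ℝ => Real.exp (-(σ * z ^ 2) / 2)) := by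
  have h := integrable_exp_neg_mul_sq (show (0:ℝ) < σ / 2 by linarith)
  convert h using 2 with z
  ring

lemma norm_aux (σ c z : ℝ) :
    ‖Complex.exp (Complex.I * c * z) * Complex.exp (-(σ : ℂ) * (z:ℂ) ^ 2 / 2)‖
      = Real.exp (-(σ * z ^ 2) / 2) := by
  rw [norm_mul]
  rw [show Complex.I * (c:ℂ) * (z:ℂ) = ((c * z : ℝ) : ℂ) * Complex.I by push_cast; ring]
  rw [show -(σ:ℂ) * (z:ℂ) ^ 2 / 2 = ((-(σ * z ^ 2) / 2 : ℝ) : ℂ) by push_cast; ring]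
  rw [Complex.norm_exp_ofReal_mul_I, Complex.norm_exp,
    Complex.ofReal_re, one_mul]

lemma int_z {σ : ℝ} (hσ : 0 < σ) (c : ℝ) :
    Integrable (fun z : ℝ =>
      Complex.exp (Complex.I * c * z) * Complex.exp (-(σ : ℂ) * (z:ℂ) ^ 2 / 2)) := by
  refine (gauss_int hσ).mono' ?_ ?_
  · apply Continuous.aestronglyMeasurable
    fun_prop
  · filter_upwards with z
    rw [norm_aux]

lemma heat_fourier {σ : ℝ} (hσ : 0 < σ) (c : ℝ) :
    ((heatKernel σ c : ℝ) : ℂ) = (1 / (2 * Real.pi) : ℂ) *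
      ∫ z : ℝ, Complex.exp (Complex.I * c * z) * Complex.exp (-(σ : ℂ) * (z:ℂ) ^ 2 / 2) := by
  have hπ := Real.pi_pos
  have h := fourierIntegral_gaussian (b := ((σ / 2 : ℝ) : ℂ)) (by simp; linarith) (c : ℂ)
  have heq : ∀ z : ℝ, -(σ:ℂ) * (z:ℂ) ^ 2 / 2 = -((σ/2 : ℝ):ℂ) * (z:ℂ) ^ 2 := by
    intro z; push_cast; ring
  simp_rw [heq]
  rw [h]
  have h1 : ((Real.pi : ℂ) / ((σ/2 : ℝ) : ℂ)) = ((2 * Real.pi / σ : ℝ) : ℂ) := by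
    push_cast
    field_simp
  rw [h1]
  have h2 : ((2 * Real.pi / σ : ℝ) : ℂ) ^ (1/2 : ℂ) = ((Real.sqrt (2 * Real.pi / σ) : ℝ) : ℂ) := by
    rw [show (1/2 : ℂ) = ((1/2 : ℝ) : ℂ) by norm_num]
    rw [← Complex.ofReal_cpow (by positivity)]
    rw [Real.sqrt_eq_rpow]
  rw [h2]
  have h3 : -(c:ℂ) ^ 2 / (4 * ((σ/2 : ℝ) : ℂ)) = ((-c ^ 2 / (2 * σ) : ℝ) : ℂ) := by
    push_cast
    field_simp
    ring
  rw [h3, ← Complex.ofReal_exp]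
  rw [show (1 / (2 * (Real.pi : ℂ))) = ((1 / (2 * Real.pi) : ℝ) : ℂ) by push_cast; ring]
  rw [← Complex.ofReal_mul, ← Complex.ofReal_mul]
  norm_cast
  have hs : Real.sqrt (2 * Real.pi * σ) * Real.sqrt (2 * Real.pi / σ) = 2 * Real.pi := by
    rw [← Real.sqrt_mul (by positivity)]
    rw [show (2 * Real.pi * σ) * (2 * Real.pi / σ) = (2 * Real.pi) ^ 2 by field_simp]
    exact Real.sqrt_sq (by positivity)
  have hpos : 0 < Real.sqrt (2 * Real.pi * σ) := Real.sqrt_pos.2 (by positivity)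
  rw [heatKernel]
  rw [div_eq_iff hpos.ne']
  symm
  calc 1 / (2 * Real.pi) * (√(2 * Real.pi / σ) * Real.exp (-c ^ 2 / (2 * σ))) * √(2 * Real.pi * σ)
      = Real.exp (-c ^ 2 / (2 * σ)) * (√(2 * Real.pi * σ) * √(2 * Real.pi / σ)) / (2 * Real.pi) := by
        ring
    _ = Real.exp (-c ^ 2 / (2 * σ)) := by rw [hs]; field_simp

lemma inner_calc (a b z : ℝ) (hz : z ≠ 0) :
    (∫ x in (0:ℝ)..a, ∫ y in (0:ℝ)..b, Complex.exp (Complex.I * ((x - y : ℝ):ℂ) * z)) =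
      (Complex.exp (Complex.I * a * z) - 1) * (Complex.exp (-Complex.I * b * z) - 1)
        / (z : ℂ) ^ 2 := by
  have hz' : (z : ℂ) ≠ 0 := Complex.ofReal_ne_zero.2 hz
  have hIz : Complex.I * (z:ℂ) ≠ 0 := mul_ne_zero Complex.I_ne_zero hz'
  have hIz' : -Complex.I * (z:ℂ) ≠ 0 := by
    simpa [neg_mul] using neg_ne_zero.2 hIz
  simp_rw [Complex.ofReal_sub]
  have inner : ∀ x : ℝ,
      (∫ y in (0:ℝ)..b, Complex.exp (Complex.I * ((x:ℂ) - (y:ℂ)) * z)) =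
        Complex.exp ((Complex.I * z) * x) *
          ((Complex.exp (-Complex.I * b * z) - 1) / (-Complex.I * z)) := by
    intro x
    have e : ∀ y : ℝ, Complex.exp (Complex.I * ((x:ℂ) - (y:ℂ)) * z) =
        Complex.exp ((Complex.I * z) * x) * Complex.exp ((-Complex.I * (z:ℂ)) * y) := by
      intro y
      rw [← Complex.exp_add]
      ring_nf
    simp_rw [e]
    rw [intervalIntegral.integral_const_mul, integral_exp_mul_complex hIz']
    norm_num
    ring_nf
  simp_rw [inner]
  rw [intervalIntegral.integral_mul_const, integral_exp_mul_complex hIz]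
  have hden : (Complex.I * (z:ℂ)) * (-Complex.I * (z:ℂ)) = (z:ℂ) ^ 2 := by
    linear_combination (-(z:ℂ) ^ 2) * Complex.I_sq
  rw [div_mul_div_comm, hden]
  norm_num
  ring_nf

lemma norm_unit (c z : ℝ) : ‖Complex.exp (Complex.I * c * z)‖ = 1 := by
  rw [show Complex.I * (c:ℂ) * (z:ℂ) = ((c * z : ℝ) : ℂ) * Complex.I by push_cast; ring]
  rw [Complex.norm_exp_ofReal_mul_I]

theorem stmt_10 (a b σ : ℝ) (ha : 0 < a) (hb : 0 < b) (hσ : 0 < σ) :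
    ((∫ x in (0:ℝ)..a, ∫ y in (0:ℝ)..b, heatKernel σ (x - y) : ℝ) : ℂ) =
      (1 / (2 * Real.pi)) *
        ∫ z : ℝ, (Complex.exp (Complex.I * a * z) - 1) * (Complex.exp (-Complex.I * b * z) - 1)
          / (z : ℂ) ^ 2 * Complex.exp (-(σ : ℂ) * z ^ 2 / 2) := by
  have hπ := Real.pi_pos
  set μx := volume.restrict (Set.Ioc (0:ℝ) a) with hμx
  set μy := volume.restrict (Set.Ioc (0:ℝ) b) with hμy
  haveI : Fact (volume (Set.Ioc (0:ℝ) a) < ⊤) := ⟨by simp [Real.volume_Ioc]⟩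
  haveI : Fact (volume (Set.Ioc (0:ℝ) b) < ⊤) := ⟨by simp [Real.volume_Ioc]⟩
  haveI : IsFiniteMeasure μx := Restrict.isFiniteMeasure _
  haveI : IsFiniteMeasure μy := Restrict.isFiniteMeasure _
  -- step 1: LHS as a product-measure integral
  have hKcont : Continuous fun p : ℝ × ℝ => ((heatKernel σ (p.1 - p.2) : ℝ) : ℂ) := by
    apply Complex.continuous_ofReal.comp
    unfold heatKernel
    fun_prop
  have hKbound : ∀ p : ℝ × ℝ, ‖((heatKernel σ (p.1 - p.2) : ℝ) : ℂ)‖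
      ≤ 1 / Real.sqrt (2 * Real.pi * σ) := by
    intro p
    rw [Complex.norm_real, Real.norm_eq_abs, heatKernel]
    have h1 : Real.exp (-(p.1 - p.2) ^ 2 / (2 * σ)) ≤ 1 := by
      rw [Real.exp_le_one_iff]
      apply div_nonpos_of_nonpos_of_nonneg
      · have : (0:ℝ) ≤ (p.1 - p.2) ^ 2 := sq_nonneg _
        linarith
      · positivity
    have h0 : 0 ≤ Real.exp (-(p.1 - p.2) ^ 2 / (2 * σ)) / Real.sqrt (2 * Real.pi * σ) := by
      positivity
    rw [_root_.abs_of_nonneg h0]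
    gcongr
  have hK : Integrable (Function.uncurry fun x y : ℝ =>
      ((heatKernel σ (x - y) : ℝ) : ℂ)) (μx.prod μy) :=
    (integrable_const _).mono' hKcont.aestronglyMeasurable
      (Filter.Eventually.of_forall hKbound)
  rw [← intervalIntegral.integral_ofReal]
  simp_rw [← intervalIntegral.integral_ofReal]
  rw [intervalIntegral.integral_of_le ha.le]
  simp_rw [intervalIntegral.integral_of_le hb.le]
  rw [MeasureTheory.integral_integral hK]
  simp_rw [heat_fourier hσ]
  rw [MeasureTheory.integral_const_mul]
  congr 1
  -- swap order of integration
  have hG : Integrable (Function.uncurry fun (p : ℝ × ℝ) (z : ℝ) =>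
      Complex.exp (Complex.I * ((p.1 - p.2 : ℝ) : ℂ) * z)
        * Complex.exp (-(σ : ℂ) * (z:ℂ) ^ 2 / 2)) ((μx.prod μy).prod volume) := by
    refine Integrable.mono'
      (g := fun q : (ℝ × ℝ) × ℝ => (1:ℝ) * Real.exp (-(σ * q.2 ^ 2) / 2)) ?_ ?_ ?_
    · exact (integrable_const (1:ℝ)).mul_prod (gauss_int hσ)
    · apply Continuous.aestronglyMeasurable
      apply Continuous.mul
      · exact Complex.continuous_exp.comp (by fun_prop)
      · exact Complex.continuous_exp.comp (by fun_prop)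
    · filter_upwards with q
      rw [Function.uncurry_apply_pair, norm_aux, one_mul]
  rw [MeasureTheory.integral_integral_swap hG]
  -- pointwise identity for a.e. z
  refine integral_congr_ae ?_
  have hz_ae : ∀ᵐ z : ℝ, z ≠ (0:ℝ) := by
    refine compl_mem_ae_iff.2 ?_
    exact measure_singleton (0:ℝ)
  filter_upwards [hz_ae] with z hz
  have hFz : Integrable (fun p : ℝ × ℝ =>
      Complex.exp (Complex.I * ((p.1 - p.2 : ℝ) : ℂ) * z)) (μx.prod μy) := by
    refine (integrable_const (1:ℝ)).mono' ?_ ?_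
    · apply Continuous.aestronglyMeasurable
      exact Complex.continuous_exp.comp (by fun_prop)
    · filter_upwards with p
      rw [norm_unit]
  simp_rw [MeasureTheory.integral_mul_const]
  rw [MeasureTheory.integral_prod _ hFz]
  rw [← intervalIntegral.integral_of_le ha.le]
  simp_rw [hμy, ← intervalIntegral.integral_of_le hb.le]
  rw [inner_calc a b z hz]
end

section
/- For all a, b > 0, one has (1/(2π)) · ∫_ℝ ((1 - e^{iaz})(1 - e^{-ibz})/z²) dz = min(a, b), where the integrand is absolutely integrable and the integral is a real number. -/
open MeasureTheory Real Filter Complex FourierTransform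

lemma norm_one_sub_exp_le (θ : ℝ) : ‖1 - Complex.exp (θ * Complex.I)‖ ≤ |θ| := by
  have h2 : ‖1 - Complex.exp (θ * Complex.I)‖ ^ 2 ≤ |θ| ^ 2 := by
    have he : (1 : ℂ) - Complex.exp (θ * Complex.I)
        = ((1 - Real.cos θ : ℝ) : ℂ) + ((-Real.sin θ : ℝ) : ℂ) * Complex.I := by
      rw [Complex.exp_mul_I, ← Complex.ofReal_cos, ← Complex.ofReal_sin]
      push_cast; ring
    rw [he, Complex.sq_norm, Complex.normSq_add_mul_I, _root_.sq_abs]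
    have := Real.one_sub_sq_div_two_le_cos (x := θ)
    nlinarith [Real.sin_sq_add_cos_sq θ]
  nlinarith [norm_nonneg (1 - Complex.exp (θ * Complex.I)), abs_nonneg θ]

lemma norm_one_sub_exp_le_two (θ : ℝ) : ‖1 - Complex.exp (θ * Complex.I)‖ ≤ 2 := by
  calc ‖1 - Complex.exp (θ * Complex.I)‖ ≤ ‖(1:ℂ)‖ + ‖Complex.exp (θ * Complex.I)‖ :=
        norm_sub_le _ _
    _ ≤ 2 := by
        rw [Complex.norm_exp_ofReal_mul_I]
        simp; norm_num

set_option maxHeartbeats 1000000 in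
lemma key_fubini (a b : ℝ) (ha : 0 < a) (hb : 0 < b) {z : ℝ} (hz : z ≠ 0) :
    ∫ u : ℝ, Complex.exp (Complex.I * z * u) *
        ((max (min b (a - u) - max 0 (-u)) 0 : ℝ) : ℂ)
      = (1 - Complex.exp (Complex.I * a * z)) * (1 - Complex.exp (-Complex.I * b * z))
          / (z : ℂ) ^ 2 := by
  have hz' : (z : ℂ) ≠ 0 := Complex.ofReal_ne_zero.2 hz
  have hIz : Complex.I * z ≠ 0 := mul_ne_zero Complex.I_ne_zero hz'
  have hIz' : -Complex.I * z ≠ 0 := by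
    simpa [neg_mul] using neg_ne_zero.2 hIz
  set H : ℝ → ℝ → ℂ := fun u s => Complex.exp (Complex.I * z * u) *
      ((Set.Icc (0:ℝ) b).indicator (fun _ => (1:ℂ)) s *
        (Set.Icc (0:ℝ) a).indicator (fun _ => (1:ℂ)) (s + u)) with hH
  -- step 1 : inner integral in s
  have step1 : ∀ u : ℝ, ∫ s : ℝ, H u s = Complex.exp (Complex.I * z * u) *
      ((max (min b (a - u) - max 0 (-u)) 0 : ℝ) : ℂ) := by
    intro u
    have hprod : ∀ s : ℝ, (Set.Icc (0:ℝ) b).indicator (fun _ => (1:ℂ)) s *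
        (Set.Icc (0:ℝ) a).indicator (fun _ => (1:ℂ)) (s + u)
        = (Set.Icc (max 0 (-u)) (min b (a - u))).indicator (fun _ => (1:ℂ)) s := by
      have hmem : ∀ s : ℝ, s ∈ Set.Icc (max 0 (-u)) (min b (a - u)) ↔
          (s ∈ Set.Icc (0:ℝ) b ∧ s + u ∈ Set.Icc (0:ℝ) a) := by
        intro s
        simp only [Set.mem_Icc, max_le_iff, le_min_iff]
        constructor
        · rintro ⟨⟨h1, h2⟩, h3, h4⟩
          exact ⟨⟨h1, h3⟩, ⟨by linarith, by linarith⟩⟩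
        · rintro ⟨⟨h1, h2⟩, h3, h4⟩
          exact ⟨⟨h1, by linarith⟩, h2, by linarith⟩
      intro s
      by_cases h : s ∈ Set.Icc (0:ℝ) b ∧ s + u ∈ Set.Icc (0:ℝ) a
      · rw [Set.indicator_of_mem h.1, Set.indicator_of_mem h.2,
          Set.indicator_of_mem ((hmem s).2 h), one_mul]
      · rw [Set.indicator_of_notMem (fun hm => h ((hmem s).1 hm))]
        rcases not_and_or.1 h with h' | h'
        · rw [Set.indicator_of_notMem h', zero_mul]
        · rw [Set.indicator_of_notMem h', mul_zero]
    simp only [hH]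
    rw [integral_const_mul]
    congr 1
    simp_rw [hprod]
    rw [integral_indicator_const (1:ℂ) measurableSet_Icc, Real.volume_real_Icc,
      Complex.real_smul, mul_one]
  have hnorm1 : ∀ w : ℂ, w.re = 0 → ‖Complex.exp w‖ = 1 := by
    intro w hw
    rw [Complex.norm_exp, hw, Real.exp_zero]
  have hexp_norm : ∀ u : ℝ, ‖Complex.exp (Complex.I * z * u)‖ = 1 := by
    intro u
    exact hnorm1 _ (by simp)
  -- step 2 : integrability on the product space
  have hmeas : AEStronglyMeasurable (Function.uncurry H) (volume.prod volume) := by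
    apply Measurable.aestronglyMeasurable
    apply Measurable.mul
    · exact (Complex.continuous_exp.comp (continuous_const.mul (Complex.continuous_ofReal.comp continuous_fst))).measurable
    · exact ((measurable_const.indicator measurableSet_Icc).comp measurable_snd).mul
        ((measurable_const.indicator measurableSet_Icc).comp
          (measurable_snd.add measurable_fst))
  have hMint : Integrable ((Set.Icc (-b) a ×ˢ Set.Icc (0:ℝ) b).indicator
      (fun _ => (1:ℝ))) (volume.prod volume) := by
    rw [integrable_indicator_iff (measurableSet_Icc.prod measurableSet_Icc)]
    exact integrableOn_const ((isCompact_Icc.prod isCompact_Icc).measure_lt_top).ne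
  have hHint : Integrable (Function.uncurry H) (volume.prod volume) := by
    apply Integrable.mono' hMint hmeas
    refine ae_of_all _ ?_
    rintro ⟨u, s⟩
    by_cases h : s ∈ Set.Icc (0:ℝ) b ∧ s + u ∈ Set.Icc (0:ℝ) a
    · have hbox : (u, s) ∈ Set.Icc (-b) a ×ˢ Set.Icc (0:ℝ) b := by
        have h1 := Set.mem_Icc.1 h.1
        have h2 := Set.mem_Icc.1 h.2
        exact ⟨Set.mem_Icc.2 ⟨by linarith [h1.1, h1.2, h2.1, h2.2],
          by linarith [h1.1, h1.2, h2.1, h2.2]⟩, h.1⟩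
      simp only [Function.uncurry, H, Set.indicator_of_mem h.1, Set.indicator_of_mem h.2,
        Set.indicator_of_mem hbox, one_mul, mul_one]
      exact le_of_eq (hexp_norm u)
    · have : H u s = 0 := by
        rcases not_and_or.1 h with h' | h' <;>
          simp [hH, Set.indicator_of_notMem h']
      simp only [Function.uncurry, this, norm_zero]
      exact Set.indicator_nonneg (fun _ _ => zero_le_one) _
  -- step 3 : swap and compute
  have inner_u : ∀ s : ℝ, (∫ u : ℝ, H u s) =
      (Set.Icc (0:ℝ) b).indicator (fun _ => (1:ℂ)) s *
        ((Complex.exp (Complex.I * z * a) - 1) / (Complex.I * z) *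
          Complex.exp (-Complex.I * z * s)) := by
    intro s
    have hfun : (fun u : ℝ => H u s) = fun u : ℝ =>
        (Set.Icc (0:ℝ) b).indicator (fun _ => (1:ℂ)) s *
          ((Set.Icc (-s) (a - s)).indicator
            (fun u : ℝ => Complex.exp (Complex.I * z * u)) u) := by
      funext u
      have hm : u ∈ Set.Icc (-s) (a - s) ↔ s + u ∈ Set.Icc (0:ℝ) a := by
        simp only [Set.mem_Icc]
        constructor
        · rintro ⟨h1, h2⟩; exact ⟨by linarith, by linarith⟩
        · rintro ⟨h1, h2⟩; exact ⟨by linarith, by linarith⟩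
      by_cases h : s + u ∈ Set.Icc (0:ℝ) a
      · rw [Set.indicator_of_mem (hm.2 h)]
        simp only [hH, Set.indicator_of_mem h, mul_one]
        ring
      · rw [Set.indicator_of_notMem (fun hu => h (hm.1 hu))]
        simp [hH, Set.indicator_of_notMem h]
    rw [hfun, integral_const_mul]
    congr 1
    rw [integral_indicator measurableSet_Icc, integral_Icc_eq_integral_Ioc,
      ← intervalIntegral.integral_of_le (by linarith : -s ≤ a - s),
      integral_exp_mul_complex hIz,
      show (Complex.I * ↑z * ↑(a - s) : ℂ) = Complex.I * z * a + -Complex.I * z * s by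
        push_cast; ring,
      show (Complex.I * ↑z * ↑(-s) : ℂ) = 0 + -Complex.I * z * s by push_cast; ring,
      Complex.exp_add, Complex.exp_add, Complex.exp_zero]
    ring
  simp_rw [← step1]
  rw [integral_integral_swap hHint]
  simp_rw [inner_u]
  have hout : (fun s : ℝ => (Set.Icc (0:ℝ) b).indicator (fun _ => (1:ℂ)) s *
      ((Complex.exp (Complex.I * z * a) - 1) / (Complex.I * z) *
        Complex.exp (-Complex.I * z * s))) =
      (Set.Icc (0:ℝ) b).indicator (fun s : ℝ =>
        (Complex.exp (Complex.I * z * a) - 1) / (Complex.I * z) *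
          Complex.exp (-Complex.I * z * s)) := by
    funext s
    by_cases h : s ∈ Set.Icc (0:ℝ) b
    · rw [Set.indicator_of_mem h, Set.indicator_of_mem h, one_mul]
    · rw [Set.indicator_of_notMem h, Set.indicator_of_notMem h, zero_mul]
  rw [hout, integral_indicator measurableSet_Icc, integral_Icc_eq_integral_Ioc,
    ← intervalIntegral.integral_of_le hb.le]
  rw [intervalIntegral.integral_const_mul, integral_exp_mul_complex hIz']
  rw [show Complex.exp (Complex.I * ↑a * ↑z) = Complex.exp (Complex.I * ↑z * ↑a) from by
      congr 1; ring,
    show Complex.exp (-Complex.I * ↑b * ↑z) = Complex.exp (-Complex.I * ↑z * ↑b) from by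
      congr 1; ring]
  simp only [Complex.ofReal_zero, mul_zero, Complex.exp_zero]
  have hI : (Complex.I : ℂ) ≠ 0 := Complex.I_ne_zero
  have hI2 : (Complex.I : ℂ) ^ 2 = -1 := Complex.I_sq
  field_simp
  linear_combination (-((1 - Complex.exp (Complex.I * ↑z * ↑a)) *
    (1 - Complex.exp (-(Complex.I * ↑z * ↑b))))) * hI2

lemma integrable_F (a b : ℝ) (ha : 0 < a) (hb : 0 < b) :
    Integrable (fun z : ℝ =>
        (1 - Complex.exp (Complex.I * a * z)) * (1 - Complex.exp (-Complex.I * b * z))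
          / (z : ℂ) ^ 2) := by
  apply Integrable.mono' (integrable_inv_one_add_sq.const_mul (4 + a * b))
  · apply Measurable.aestronglyMeasurable
    apply Measurable.div
    · fun_prop
    · fun_prop
  · refine ae_of_all _ fun z => ?_
    by_cases hz : z = 0
    · simp [hz]
      positivity
    · have h1 : ‖1 - Complex.exp (Complex.I * a * z)‖ ≤ a * |z| := by
        rw [show (Complex.I * ↑a * ↑z : ℂ) = ↑(a * z) * Complex.I by push_cast; ring]
        simpa [abs_mul, abs_of_pos ha] using norm_one_sub_exp_le (a * z)
      have h2 : ‖1 - Complex.exp (Complex.I * a * z)‖ ≤ 2 := by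
        rw [show (Complex.I * ↑a * ↑z : ℂ) = ↑(a * z) * Complex.I by push_cast; ring]
        exact norm_one_sub_exp_le_two (a * z)
      have h3 : ‖1 - Complex.exp (-Complex.I * b * z)‖ ≤ b * |z| := by
        rw [show (-Complex.I * ↑b * ↑z : ℂ) = ↑(-(b * z)) * Complex.I by push_cast; ring]
        simpa [abs_mul, abs_of_pos hb] using norm_one_sub_exp_le (-(b * z))
      have h4 : ‖1 - Complex.exp (-Complex.I * b * z)‖ ≤ 2 := by
        rw [show (-Complex.I * ↑b * ↑z : ℂ) = ↑(-(b * z)) * Complex.I by push_cast; ring]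
        exact norm_one_sub_exp_le_two (-(b * z))
      rw [norm_div, norm_mul, norm_pow, Complex.norm_real, Real.norm_eq_abs, _root_.sq_abs]
      rw [show (4 + a * b) * (1 + z ^ 2)⁻¹ = (4 + a * b) / (1 + z ^ 2) by ring,
        div_le_div_iff₀ (by positivity) (by positivity)]
      have p1 : ‖1 - Complex.exp (Complex.I * a * z)‖ *
          ‖1 - Complex.exp (-Complex.I * b * z)‖ ≤ 4 := by
        nlinarith [norm_nonneg (1 - Complex.exp (Complex.I * a * z)),
          norm_nonneg (1 - Complex.exp (-Complex.I * b * z))]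
      have p2 : ‖1 - Complex.exp (Complex.I * a * z)‖ *
          ‖1 - Complex.exp (-Complex.I * b * z)‖ ≤ a * b * z ^ 2 := by
        have key : (a * |z|) * (b * |z|) = a * b * z ^ 2 := by
          rw [show (a * |z|) * (b * |z|) = a * b * |z| ^ 2 by ring, _root_.sq_abs]
        exact (mul_le_mul h1 h3 (norm_nonneg _)
          (by positivity : (0:ℝ) ≤ a * |z|)).trans (le_of_eq key)
      nlinarith [p1, p2, sq_nonneg z]

theorem stmt_11 (a b : ℝ) (ha : 0 < a) (hb : 0 < b) :
    Integrable (fun z : ℝ =>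
        (1 - Complex.exp (Complex.I * a * z)) * (1 - Complex.exp (-Complex.I * b * z))
          / (z : ℂ) ^ 2)
      ∧ (1 / (2 * Real.pi) : ℂ) *
          (∫ z : ℝ, (1 - Complex.exp (Complex.I * a * z)) *
            (1 - Complex.exp (-Complex.I * b * z)) / (z : ℂ) ^ 2) = (min a b : ℝ) := by
  have hF := integrable_F a b ha hb
  refine ⟨hF, ?_⟩
  set G : ℝ → ℂ := fun u => ((max (min b (a - u) - max 0 (-u)) 0 : ℝ) : ℂ) with hG
  have hGcont : Continuous G := by
    apply Complex.continuous_ofReal.comp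
    exact (((continuous_const.min (continuous_const.sub continuous_id)).sub
      (continuous_const.max continuous_id.neg)).max continuous_const)
  have hGsupp : HasCompactSupport G := by
    apply HasCompactSupport.intro (isCompact_Icc (a := -b) (b := a))
    intro u hu
    simp only [Set.mem_Icc, not_and_or, not_le] at hu
    have hle : min b (a - u) - max 0 (-u) ≤ 0 := by
      rcases hu with hu | hu
      · linarith [min_le_left b (a - u), le_max_right 0 (-u)]
      · linarith [min_le_right b (a - u), le_max_left 0 (-u)]
    simp only [hG]
    rw [max_eq_right hle]
    exact Complex.ofReal_zero
  have hGint : Integrable G := hGcont.integrable_of_hasCompactSupport hGsupp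
  have hG0 : G 0 = ((min a b : ℝ) : ℂ) := by
    simp only [hG]
    norm_num
    rw [max_eq_left (le_of_lt (lt_min hb ha)), min_comm]
  have hne : (-(2 * π) : ℝ) ≠ 0 := by
    have := Real.pi_pos; intro h; nlinarith
  have h𝓕 : ∀ w : ℝ, w ≠ 0 → 𝓕 G w =
      (1 - Complex.exp (Complex.I * a * ((-(2 * π) * w : ℝ) : ℂ))) *
        (1 - Complex.exp (-Complex.I * b * ((-(2 * π) * w : ℝ) : ℂ))) / ((-(2 * π) * w : ℝ) : ℂ) ^ 2 := by
    intro w hw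
    rw [Real.fourier_real_eq_integral_exp_smul]
    have hz : (-(2 * π) * w : ℝ) ≠ 0 := mul_ne_zero hne hw
    have hpt : ∀ v : ℝ, Complex.exp (↑(-2 * π * v * w) * Complex.I) • G v
        = Complex.exp (Complex.I * (-(2 * π) * w : ℝ) * v) * G v := by
      intro v
      rw [smul_eq_mul]
      congr 2
      push_cast; ring
    simp only [hpt]
    exact key_fubini a b ha hb hz
  have h0 : ∀ᵐ w : ℝ, w ≠ 0 := by
    refine (ae_iff).2 ?_
    convert Real.volume_singleton (a := 0) using 2
    ext w; simp
  have h𝓕ae : 𝓕 G =ᵐ[volume] fun w =>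
      (1 - Complex.exp (Complex.I * a * ((-(2 * π) * w : ℝ) : ℂ))) *
        (1 - Complex.exp (-Complex.I * b * ((-(2 * π) * w : ℝ) : ℂ))) / ((-(2 * π) * w : ℝ) : ℂ) ^ 2 := by
    filter_upwards [h0] with w hw
    exact h𝓕 w hw
  have hcomp : Integrable (fun w : ℝ =>
      (1 - Complex.exp (Complex.I * a * ((-(2 * π) * w : ℝ) : ℂ))) *
        (1 - Complex.exp (-Complex.I * b * ((-(2 * π) * w : ℝ) : ℂ))) / ((-(2 * π) * w : ℝ) : ℂ) ^ 2) := by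
    have := hF.comp_mul_left' hne
    simpa using this
  have h𝓕int : Integrable (𝓕 G) := hcomp.congr h𝓕ae.symm
  have hinv : 𝓕⁻ (𝓕 G) 0 = G 0 :=
    hGint.fourierInv_fourier_eq h𝓕int hGcont.continuousAt
  have hinv0 : (∫ w : ℝ, 𝓕 G w) = G 0 := by
    rw [← hinv, Real.fourierInv_eq']
    simp
  have hcv : (∫ w : ℝ, 𝓕 G w) = |(-(2 * π) : ℝ)⁻¹| •
      ∫ z : ℝ, (1 - Complex.exp (Complex.I * a * z)) *
        (1 - Complex.exp (-Complex.I * b * z)) / (z : ℂ) ^ 2 := by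
    rw [integral_congr_ae h𝓕ae]
    exact Measure.integral_comp_mul_left
      (fun z : ℝ => (1 - Complex.exp (Complex.I * a * z)) *
        (1 - Complex.exp (-Complex.I * b * z)) / (z : ℂ) ^ 2) (-(2 * π))
  rw [hG0] at hinv0
  rw [hcv] at hinv0
  have habs : |(-(2 * π) : ℝ)⁻¹| = (2 * π)⁻¹ := by
    rw [abs_inv, abs_neg, abs_of_pos (by positivity : (0:ℝ) < 2 * π)]
  rw [habs] at hinv0
  rw [← hinv0]
  rw [Complex.real_smul]
  push_cast
  ring
end

section
/- There exists a constant C > 0 such that for every σ > 0 and every a ∈ ℝ, ∫_ℝ |p_σ(y - a) - p_σ(y)| dy ≤ C · min(|a|/√σ, 1). -/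
open MeasureTheory Real Filter

open Set

lemma hk_nonneg (σ x : ℝ) : 0 ≤ heatKernel σ x := by
  unfold heatKernel; positivity

lemma hk_eq_s13 (σ : ℝ) (x : ℝ) :
    heatKernel σ x = Real.exp (-(2*σ)⁻¹ * x ^ 2) / Real.sqrt (2 * Real.pi * σ) := by
  unfold heatKernel; congr 1; ring_nf

lemma hk_integrable (σ : ℝ) (hσ : 0 < σ) : Integrable (heatKernel σ) := by
  have h : Integrable (fun x : ℝ => Real.exp (-(2*σ)⁻¹ * x ^ 2)) :=
    integrable_exp_neg_mul_sq (by positivity)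
  exact (h.div_const (Real.sqrt (2 * Real.pi * σ))).congr
    (by filter_upwards with x using (hk_eq_s13 σ x).symm)

lemma hk_integral (σ : ℝ) (hσ : 0 < σ) : ∫ x, heatKernel σ x = 1 := by
  have h : ∫ x : ℝ, Real.exp (-(2*σ)⁻¹ * x ^ 2) = Real.sqrt (Real.pi / (2*σ)⁻¹) :=
    integral_gaussian _
  calc ∫ x, heatKernel σ x
      = ∫ x : ℝ, Real.exp (-(2*σ)⁻¹ * x ^ 2) / Real.sqrt (2 * Real.pi * σ) := by
        simp_rw [hk_eq_s13 σ]
    _ = Real.sqrt (Real.pi / (2*σ)⁻¹) / Real.sqrt (2 * Real.pi * σ) := by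
        rw [integral_div, h]
    _ = 1 := by
        rw [show Real.pi / (2*σ)⁻¹ = 2 * Real.pi * σ by field_simp,
          div_self (by positivity)]

lemma hk_mono (σ : ℝ) (hσ : 0 < σ) {x₁ x₂ : ℝ} (h : x₂ ^ 2 ≤ x₁ ^ 2) :
    heatKernel σ x₁ ≤ heatKernel σ x₂ := by
  unfold heatKernel
  apply div_le_div_of_nonneg_right ?_ (by positivity)
  · exact Real.exp_le_exp.mpr (by apply div_le_div_of_nonneg_right ?_ ?_ <;> · first | linarith | positivity)

lemma shift_Iic (f : ℝ → ℝ) (a c : ℝ) :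
    ∫ y in Iic c, f (y - a) = ∫ y in Iic (c - a), f y := by
  rw [← integral_indicator measurableSet_Iic, ← integral_indicator measurableSet_Iic,
    ← integral_sub_right_eq_self (fun y => (Iic (c - a)).indicator f y) a]
  congr 1; ext y
  simp only [Set.indicator_apply, mem_Iic, sub_le_sub_iff_right]

lemma key (σ : ℝ) (hσ : 0 < σ) (a : ℝ) (ha : 0 ≤ a) :
    ∫ y : ℝ, |heatKernel σ (y - a) - heatKernel σ y| ≤ 2 * min (a / Real.sqrt σ) 1 := by
  set p := heatKernel σ with hp
  have hint : Integrable p := hk_integrable σ hσ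
  have hints : Integrable (fun y => p (y - a)) := hint.comp_sub_right a
  have hintd : Integrable (fun y => |p (y - a) - p y|) := (hints.sub hint).abs
  set c := a / 2 with hc
  -- Bound A : I ≤ 2
  have bA : ∫ y : ℝ, |p (y - a) - p y| ≤ 2 := by
    have h1 : ∫ y : ℝ, |p (y - a) - p y| ≤ ∫ y : ℝ, (p (y - a) + p y) := by
      refine integral_mono hintd (hints.add hint) fun y => ?_
      calc |p (y - a) - p y| ≤ |p (y - a)| + |p y| := abs_sub _ _
        _ = p (y - a) + p y := by
            rw [abs_of_nonneg (hk_nonneg σ _), abs_of_nonneg (hk_nonneg σ _)]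
    have h2 : ∫ y : ℝ, (p (y - a) + p y) = 2 := by
      rw [integral_add hints hint, integral_sub_right_eq_self p a, hk_integral σ hσ]
      norm_num
    linarith
  -- splitting computation
  have hIic : ∀ b : ℝ, ∫ y in Iic b, (fun y => p (y - a)) y = ∫ y in Iic (b - a), p y :=
    fun b => shift_Iic p a b
  have hsplit : ∫ y : ℝ, |p (y - a) - p y|
      = (∫ y in Iic c, |p (y - a) - p y|) + ∫ y in Ioi c, |p (y - a) - p y| :=
    (intervalIntegral.integral_Iic_add_Ioi hintd.integrableOn hintd.integrableOn).symm
  have habs1 : ∀ y ∈ Iic c, |p (y - a) - p y| = p y - p (y - a) := by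
    intro y hy
    rw [abs_of_nonpos (by
      have := hk_mono σ hσ (x₁ := y - a) (x₂ := y) (by simp only [mem_Iic, hc] at hy; nlinarith)
      linarith)]
    ring
  have habs2 : ∀ y ∈ Ioi c, |p (y - a) - p y| = p (y - a) - p y := by
    intro y hy
    rw [abs_of_nonneg (by
      have := hk_mono σ hσ (x₁ := y) (x₂ := y - a) (by simp only [mem_Ioi, hc] at hy; nlinarith)
      linarith)]
  have e1 : ∫ y in Iic c, |p (y - a) - p y|
      = (∫ y in Iic c, p y) - ∫ y in Iic (-c), p y := by
    rw [setIntegral_congr_fun measurableSet_Iic habs1,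
      integral_sub hint.integrableOn hints.integrableOn, hIic c,
      show c - a = -c by rw [hc]; ring]
  have e2 : ∫ y in Ioi c, |p (y - a) - p y|
      = (∫ y in Iic c, p y) - ∫ y in Iic (-c), p y := by
    rw [setIntegral_congr_fun measurableSet_Ioi habs2,
      integral_sub hints.integrableOn hint.integrableOn]
    have t1 : (∫ y in Iic c, (fun y => p (y - a)) y) + ∫ y in Ioi c, (fun y => p (y - a)) y
        = ∫ y : ℝ, p (y - a) := intervalIntegral.integral_Iic_add_Ioi hints.integrableOn hints.integrableOn
    have t2 : (∫ y in Iic c, p y) + ∫ y in Ioi c, p y = ∫ y : ℝ, p y :=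
      intervalIntegral.integral_Iic_add_Ioi hint.integrableOn hint.integrableOn
    have t3 : ∫ y : ℝ, p (y - a) = ∫ y : ℝ, p y := integral_sub_right_eq_self p a
    have t4 := hIic c
    rw [show c - a = -c by rw [hc]; ring] at t4
    simp only at t1 t4
    linarith
  have eIoc : (∫ y in Iic c, p y) - ∫ y in Iic (-c), p y = ∫ y in Ioc (-c) c, p y := by
    rw [intervalIntegral.integral_Iic_sub_Iic hint.integrableOn hint.integrableOn,
      intervalIntegral.integral_of_le (by rw [hc]; linarith)]
  -- Bound B
  have hk0 : heatKernel σ 0 = 1 / Real.sqrt (2 * Real.pi * σ) := by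
    unfold heatKernel; norm_num
  have bIoc : ∫ y in Ioc (-c) c, p y ≤ a / Real.sqrt (2 * Real.pi * σ) := by
    have h1 : ∫ y in Ioc (-c) c, p y ≤ ∫ _y in Ioc (-c) c, heatKernel σ 0 := by
      refine setIntegral_mono_on hint.integrableOn ((integrableOn_const_iff).mpr ?_)
        measurableSet_Ioc fun y _ => hk_mono σ hσ (by simpa using sq_nonneg y)
      right; rw [Real.volume_Ioc]; exact ENNReal.ofReal_lt_top
    have h2 : ∫ _y in Ioc (-c) c, heatKernel σ 0 = a / Real.sqrt (2 * Real.pi * σ) := by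
      rw [setIntegral_const, measureReal_def, Real.volume_Ioc, smul_eq_mul,
        ENNReal.toReal_ofReal (by rw [hc]; linarith), hk0]
      rw [hc]; ring
    linarith
  have bB : ∫ y : ℝ, |p (y - a) - p y| ≤ a / Real.sqrt σ := by
    have hsqrt : 2 * Real.sqrt σ ≤ Real.sqrt (2 * Real.pi * σ) := by
      rw [show 2 * Real.pi * σ = (2 * Real.pi) * σ by ring,
        Real.sqrt_mul (by positivity)]
      have hs := Real.sq_sqrt (show (0:ℝ) ≤ 2 * Real.pi by positivity)
      nlinarith [Real.sqrt_nonneg (2 * Real.pi), Real.pi_gt_three, Real.sqrt_nonneg σ]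
    have hfin : 2 * (a / Real.sqrt (2 * Real.pi * σ)) ≤ a / Real.sqrt σ := by
      have h1 : 2 * (a / Real.sqrt (2 * Real.pi * σ)) = a / (Real.sqrt (2 * Real.pi * σ) / 2) := by
        field_simp
      rw [h1]
      exact div_le_div_of_nonneg_left ha (Real.sqrt_pos.mpr hσ) (by linarith)
    calc ∫ y : ℝ, |p (y - a) - p y| = 2 * ∫ y in Ioc (-c) c, p y := by
          rw [hsplit, e1, e2, eIoc]; ring
      _ ≤ 2 * (a / Real.sqrt (2 * Real.pi * σ)) := by linarith
      _ ≤ a / Real.sqrt σ := hfin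
  rcases le_total (a / Real.sqrt σ) 1 with h | h
  · rw [min_eq_left h]
    have : 0 ≤ a / Real.sqrt σ := by positivity
    linarith
  · rw [min_eq_right h]; linarith

theorem stmt_13 :
    ∃ C : ℝ, 0 < C ∧ ∀ σ : ℝ, 0 < σ → ∀ a : ℝ,
      ∫ y : ℝ, |heatKernel σ (y - a) - heatKernel σ y| ≤
        C * min (|a| / Real.sqrt σ) 1 := by
  refine ⟨2, by norm_num, fun σ hσ a => ?_⟩
  rcases le_or_gt 0 a with ha | ha
  · rw [abs_of_nonneg ha]; exact key σ hσ a ha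
  · have heq : ∫ y : ℝ, |heatKernel σ (y - a) - heatKernel σ y|
        = ∫ y : ℝ, |heatKernel σ (y - (-a)) - heatKernel σ y| := by
      rw [← integral_sub_right_eq_self
        (fun y => |heatKernel σ (y - (-a)) - heatKernel σ y|) a]
      congr 1
      funext y
      rw [show y - a - -a = y by ring, abs_sub_comm]
    rw [heq, show |a| = -a from abs_of_neg ha]
    exact key σ hσ (-a) (by linarith)
end

section
/- Fix t > 0 and β ∈ (0, 1/2). Then the limit as x → ∞ of ∫_{x^β}^{t x²} ∫_ℝ (1/(s·(t - s·x^{-2}))) · exp(-t·(y - s/(2t))²/(s·(t - s·x^{-2}))) · exp(-s/(4t·(t - s·x^{-2}))) dy ds equals 0. -/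
open MeasureTheory Real Filter

lemma exp_neg_le_inv_sqrt {u : ℝ} (hu : 0 < u) : Real.exp (-u) ≤ (Real.sqrt u)⁻¹ := by
  rw [Real.exp_neg]
  apply inv_anti₀ (Real.sqrt_pos.mpr hu)
  calc Real.sqrt u ≤ u + 1 := by nlinarith [Real.sq_sqrt hu.le, Real.sqrt_nonneg u]
    _ ≤ Real.exp u := by linarith [Real.add_one_le_exp u]

lemma gauss_int_s15 (D t m r : ℝ) (ht : 0 < t) :
    (∫ y : ℝ, (1/D) * Real.exp (-t * (y - m)^2 / D) * Real.exp r)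
      = (1/D) * Real.sqrt (π * D / t) * Real.exp r := by
  have key : ∀ y : ℝ, (1/D) * Real.exp (-t * (y - m)^2 / D) * Real.exp r
      = ((1/D) * Real.exp r) * Real.exp (-(t/D) * (y - m)^2) := by
    intro y
    rw [show -t * (y - m)^2 / D = -(t/D) * (y - m)^2 by ring]
    ring
  simp_rw [key, integral_const_mul]
  have hshift := MeasureTheory.integral_sub_right_eq_self (μ := volume)
    (fun y : ℝ => Real.exp (-(t/D) * y^2)) m
  rw [hshift, integral_gaussian, show π / (t/D) = π * D / t by field_simp]
  ring

lemma exp_int (a b c : ℝ) (hc : 0 < c) (hab : a ≤ b) :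
    ∫ s in Set.Ioc a b, Real.exp (-s/c) ≤ c * Real.exp (-a/c) := by
  have h1 : ∫ s in Set.Ioc a b, Real.exp (-s/c)
      = ∫ s in a..b, Real.exp (-s/c) := (intervalIntegral.integral_of_le hab).symm
  have h2 : ∫ s in a..b, Real.exp (-s/c)
      = (fun s => -c * Real.exp (-s/c)) b - (fun s => -c * Real.exp (-s/c)) a := by
    apply intervalIntegral.integral_eq_sub_of_hasDerivAt
    · intro s hs
      have h : HasDerivAt (fun s : ℝ => -s/c) (-1/c) s := by
        simpa using ((hasDerivAt_id s).neg.div_const c)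
      have h2 := (h.exp).const_mul (-c)
      have e : Real.exp (-s/c) = -c * (Real.exp (-s/c) * (-1/c)) := by field_simp
      rw [e]; exact h2
    · exact (Real.continuous_exp.comp (continuous_id.neg.div_const c)).intervalIntegrable a b
  rw [h1, h2]
  simp only
  nlinarith [Real.exp_pos (-b/c)]

theorem stmt_15 (t β : ℝ) (ht : 0 < t) (hβ : β ∈ Set.Ioo (0:ℝ) (1/2)) :
    Tendsto (fun x : ℝ =>
      ∫ s in (x ^ β)..(t * x ^ 2), ∫ y : ℝ,
        (1 / (s * (t - s * x ^ (-(2:ℝ))))) *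
          Real.exp (-t * (y - s / (2 * t)) ^ 2 / (s * (t - s * x ^ (-(2:ℝ))))) *
            Real.exp (-s / (4 * t * (t - s * x ^ (-(2:ℝ))))))
      atTop (nhds 0) := by
  obtain ⟨hβ0, hβ2⟩ := hβ
  set c : ℝ := 8 * t^2 with hc_def
  have hc : 0 < c := by positivity
  -- the dominating function tends to 0
  have hG : Tendsto (fun x : ℝ => Real.sqrt (8*π) * (c * Real.exp (-(x^β)/c)))
      atTop (nhds 0) := by
    have h1 : Tendsto (fun x : ℝ => x ^ β) atTop atTop := tendsto_rpow_atTop hβ0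
    have h2 : Tendsto (fun u : ℝ => -u/c) atTop atBot :=
      (tendsto_neg_atTop_atBot).atBot_div_const hc
    have h3 : Tendsto (fun x : ℝ => Real.exp (-(x^β)/c)) atTop (nhds 0) :=
      Real.tendsto_exp_atBot.comp (h2.comp h1)
    have h4 := ((h3.const_mul c).const_mul (Real.sqrt (8*π)))
    simpa using h4
  apply squeeze_zero' ?_ ?_ hG
  · -- nonnegativity eventually
    filter_upwards [eventually_ge_atTop (1:ℝ), eventually_ge_atTop (2/t)] with x hx1 hx2
    have hx0 : (0:ℝ) < x := lt_of_lt_of_le one_pos hx1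
    have hxpow : x ^ (-(2:ℝ)) = (x^2)⁻¹ := by
      rw [show (-(2:ℝ)) = -((2:ℕ):ℝ) by norm_num, Real.rpow_neg hx0.le, Real.rpow_natCast]
    have ha1 : (1:ℝ) ≤ x ^ β := by
      have := Real.rpow_le_rpow_of_exponent_le hx1 hβ0.le
      simpa [Real.rpow_zero] using this
    have hab : x ^ β ≤ t * x ^ 2 := by
      have h1 : x ^ β ≤ x ^ (1:ℝ) :=
        Real.rpow_le_rpow_of_exponent_le hx1 (by linarith)
      rw [Real.rpow_one] at h1
      have h2 : 2 ≤ t * x := by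
        rw [div_le_iff₀ ht] at hx2; linarith [hx2]
      nlinarith
    rw [intervalIntegral.integral_of_le hab]
    apply setIntegral_nonneg measurableSet_Ioc
    intro s hs
    apply integral_nonneg
    intro y
    have hs0 : 0 < s := lt_of_lt_of_le (lt_of_lt_of_le one_pos ha1) hs.1.le
    have hA0 : 0 ≤ t - s * x ^ (-(2:ℝ)) := by
      rw [hxpow, sub_nonneg]
      rw [mul_inv_le_iff₀ (by positivity : (0:ℝ) < x^2)]
      exact hs.2
    have := Real.exp_pos (-t * (y - s / (2 * t)) ^ 2 / (s * (t - s * x ^ (-(2:ℝ)))))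
    have := Real.exp_pos (-s / (4 * t * (t - s * x ^ (-(2:ℝ)))))
    have h1 : (0:ℝ) ≤ 1 / (s * (t - s * x ^ (-(2:ℝ)))) :=
      one_div_nonneg.mpr (mul_nonneg hs0.le hA0)
    positivity
  · -- upper bound eventually
    filter_upwards [eventually_ge_atTop (1:ℝ), eventually_ge_atTop (2/t)] with x hx1 hx2
    have hx0 : (0:ℝ) < x := lt_of_lt_of_le one_pos hx1
    have hxpow : x ^ (-(2:ℝ)) = (x^2)⁻¹ := by
      rw [show (-(2:ℝ)) = -((2:ℕ):ℝ) by norm_num, Real.rpow_neg hx0.le, Real.rpow_natCast]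
    have ha1 : (1:ℝ) ≤ x ^ β := by
      have := Real.rpow_le_rpow_of_exponent_le hx1 hβ0.le
      simpa [Real.rpow_zero] using this
    have hab : x ^ β ≤ t * x ^ 2 := by
      have h1 : x ^ β ≤ x ^ (1:ℝ) :=
        Real.rpow_le_rpow_of_exponent_le hx1 (by linarith)
      rw [Real.rpow_one] at h1
      have h2 : 2 ≤ t * x := by
        rw [div_le_iff₀ ht] at hx2; linarith [hx2]
      nlinarith
    rw [intervalIntegral.integral_of_le hab]
    have key : ∀ s ∈ Set.Ioc (x ^ β) (t * x ^ 2),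
        (∫ y : ℝ, (1 / (s * (t - s * x ^ (-(2:ℝ)))))
          * Real.exp (-t * (y - s / (2 * t)) ^ 2 / (s * (t - s * x ^ (-(2:ℝ)))))
          * Real.exp (-s / (4 * t * (t - s * x ^ (-(2:ℝ))))))
          ≤ Real.sqrt (8*π) * Real.exp (-s/c) := by
      intro s hs
      have hs1 : (1:ℝ) ≤ s := le_trans ha1 hs.1.le
      have hs0 : (0:ℝ) < s := lt_of_lt_of_le one_pos hs1
      set A : ℝ := t - s * x ^ (-(2:ℝ)) with hA_def
      have hA0 : 0 ≤ A := by
        rw [hA_def, hxpow, sub_nonneg]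
        rw [mul_inv_le_iff₀ (by positivity : (0:ℝ) < x^2)]
        exact hs.2
      have hAt : A ≤ t := by
        rw [hA_def, hxpow]
        have : 0 ≤ s * (x^2)⁻¹ := by positivity
        linarith
      rcases eq_or_lt_of_le hA0 with hAz | hA
      · -- A = 0 : integrand vanishes
        have hz : ∀ y : ℝ, (1 / (s * A))
            * Real.exp (-t * (y - s / (2 * t)) ^ 2 / (s * A))
            * Real.exp (-s / (4 * t * A)) = 0 := by
          intro y
          rw [← hAz]
          simp
        simp only [hz, integral_zero]
        positivity
      · -- A > 0 : compute the Gaussian integral and estimate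
        have hD : 0 < s * A := mul_pos hs0 hA
        rw [gauss_int_s15 (s * A) t (s / (2*t)) (-s / (4 * t * A)) ht]
        have hfront : (1/(s*A)) * Real.sqrt (π * (s*A) / t) = Real.sqrt (π / (t * (s*A))) := by
          rw [show π / (t * (s*A)) = (π * (s*A) / t) * ((s*A)⁻¹)^2 by field_simp]
          rw [Real.sqrt_mul (by positivity), Real.sqrt_sq (by positivity)]
          ring
        have hE : Real.exp (-s / (4 * t * A))
            = Real.exp (-(s / (8 * t * A))) * Real.exp (-(s / (8 * t * A))) := by
          rw [← Real.exp_add]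
          congr 1
          field_simp
          ring
        have hE1 : Real.exp (-(s / (8 * t * A))) ≤ Real.sqrt (8 * t * A / s) := by
          have hu : 0 < s / (8 * t * A) := by positivity
          calc Real.exp (-(s / (8 * t * A))) ≤ (Real.sqrt (s / (8 * t * A)))⁻¹ :=
                exp_neg_le_inv_sqrt hu
            _ = Real.sqrt (8 * t * A / s) := by
                rw [← Real.sqrt_inv, inv_div]
        have hE2 : Real.exp (-(s / (8 * t * A))) ≤ Real.exp (-s/c) := by
          apply Real.exp_le_exp.mpr
          rw [neg_div]
          apply neg_le_neg
          rw [hc_def]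
          apply div_le_div_of_nonneg_left hs0.le (by positivity)
          nlinarith
        calc (1/(s*A)) * Real.sqrt (π * (s*A) / t) * Real.exp (-s / (4 * t * A))
            = Real.sqrt (π / (t * (s*A)))
              * (Real.exp (-(s / (8 * t * A))) * Real.exp (-(s / (8 * t * A)))) := by
              rw [hfront, hE, mul_assoc]
          _ ≤ Real.sqrt (π / (t * (s*A))) * (Real.sqrt (8 * t * A / s) * Real.exp (-s/c)) := by
              apply mul_le_mul_of_nonneg_left _ (Real.sqrt_nonneg _)
              exact mul_le_mul hE1 hE2 (Real.exp_pos _).le (Real.sqrt_nonneg _)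
          _ = (Real.sqrt (π / (t * (s*A))) * Real.sqrt (8 * t * A / s)) * Real.exp (-s/c) := by
              ring
          _ = (Real.sqrt (8 * π) / s) * Real.exp (-s/c) := by
              rw [← Real.sqrt_mul (by positivity)]
              rw [show π / (t * (s*A)) * (8 * t * A / s) = 8 * π * (s⁻¹)^2 by
                field_simp]
              rw [Real.sqrt_mul (by positivity), Real.sqrt_sq (by positivity)]
              ring
          _ ≤ Real.sqrt (8 * π) * Real.exp (-s/c) := by
              apply mul_le_mul_of_nonneg_right _ (Real.exp_pos _).le
              exact div_le_self (Real.sqrt_nonneg _) hs1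
    calc (∫ s in Set.Ioc (x ^ β) (t * x ^ 2), ∫ y : ℝ,
            (1 / (s * (t - s * x ^ (-(2:ℝ)))))
              * Real.exp (-t * (y - s / (2 * t)) ^ 2 / (s * (t - s * x ^ (-(2:ℝ)))))
              * Real.exp (-s / (4 * t * (t - s * x ^ (-(2:ℝ))))))
        ≤ ∫ s in Set.Ioc (x ^ β) (t * x ^ 2), Real.sqrt (8*π) * Real.exp (-s/c) := by
          apply integral_mono_of_nonneg
          · rw [EventuallyLE, ae_restrict_iff' measurableSet_Ioc]
            apply ae_of_all
            intro s hs
            apply integral_nonneg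
            intro y
            have hs0 : 0 < s := lt_of_lt_of_le (lt_of_lt_of_le one_pos ha1) hs.1.le
            have hA0 : 0 ≤ t - s * x ^ (-(2:ℝ)) := by
              rw [hxpow, sub_nonneg]
              rw [mul_inv_le_iff₀ (by positivity : (0:ℝ) < x^2)]
              exact hs.2
            have h1 : (0:ℝ) ≤ 1 / (s * (t - s * x ^ (-(2:ℝ)))) :=
              one_div_nonneg.mpr (mul_nonneg hs0.le hA0)
            positivity
          · apply Continuous.integrableOn_Ioc
            exact continuous_const.mul (Real.continuous_exp.comp (continuous_id.neg.div_const c))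
          · rw [EventuallyLE, ae_restrict_iff' measurableSet_Ioc]
            exact ae_of_all _ key
      _ = Real.sqrt (8*π) * ∫ s in Set.Ioc (x ^ β) (t * x ^ 2), Real.exp (-s/c) :=
          integral_const_mul _ _
      _ ≤ Real.sqrt (8*π) * (c * Real.exp (-(x^β)/c)) := by
          apply mul_le_mul_of_nonneg_left _ (Real.sqrt_nonneg _)
          have := exp_int (x^β) (t*x^2) c hc hab
          simpa [neg_div] using this
end
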